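/- arXiv:1908.09466 — 10 statements merged into one kernel-verified Lean document; each statement's English description precedes it below -/
import Mathlib

section
/- Let A be an N×N complex matrix, let C and D be M×N complex matrices, let η ∈ ℂ, and let z₀, g ∈ ℂ^N satisfy (η·I_N − A)·z₀ = g and C·z₀ + D·g = 0. Let z : ℝ → ℂ^N be differentiable with z'(t) = A·z(t) for all t. Then the function ž(t) := z(t) + e^{ηt}·z₀ satisfies, for all t ∈ ℝ: (i) ž'(t) = A·ž(t) + e^{ηt}·g, and (ii) C·ž(t) + D·(e^{ηt}·g) = C·z(t). In other words, the zero-dynamics attack signal ğ(t) = g·e^{ηt} shifts the state trajectory by e^{ηt}·z₀ while producing exactly the same output as the unattacked system. -/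
/-!
Since `(η I - A) z₀ = g`, the shift `e^{ηt} z₀` has derivative `η e^{ηt} z₀ = A (e^{ηt} z₀) + e^{ηt} g`,
so by linearity `z + e^{ηt} z₀` solves the state equation driven by the input `e^{ηt} g`; and
`C z₀ + D g = 0` makes the shift and the input cancel in the output.
-/

open Matrix

theorem hasDerivAt_cexp_const_mul_ofReal (η : ℂ) (t : ℝ) :
    HasDerivAt (fun s : ℝ => Complex.exp (η * s)) (Complex.exp (η * t) * η) t :=
  ((hasDerivAt_id (t : ℂ)).const_mul η |>.cexp |>.comp_ofReal).congr_deriv (by simp)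

namespace ZeroDynamics

variable {R m n : Type*} [CommRing R] [Fintype n]

theorem mulVec_shift_add_input [DecidableEq n] {A : Matrix n n R} {η : R} {z₀ g : n → R}
    (hker : (η • 1 - A) *ᵥ z₀ = g) (x : n → R) (e : R) :
    A *ᵥ (x + e • z₀) + e • g = A *ᵥ x + (e * η) • z₀ := by
  rw [← hker, sub_mulVec, smul_mulVec, one_mulVec, mulVec_add, mulVec_smul, smul_sub, smul_smul]
  abel

theorem output_shift_eq {C D : Matrix m n R} {z₀ g : n → R}
    (hker : C *ᵥ z₀ + D *ᵥ g = 0) (x : n → R) (e : R) :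
    C *ᵥ (x + e • z₀) + D *ᵥ (e • g) = C *ᵥ x := by
  rw [mulVec_add, mulVec_smul, mulVec_smul, add_assoc, ← smul_add, hker, smul_zero, add_zero]

end ZeroDynamics

/-- Zero-dynamics attack invariance (Definition 2 / Proposition 2):
if `(η I - A) z₀ = g` and `C z₀ + D g = 0`, and `z` solves `ż = A z`, then
`ž(t) = z(t) + e^{ηt} z₀` solves `ž' = A ž + e^{ηt} g` and produces the same output. -/
theorem stmt_0 {N M : ℕ}
    (A : Matrix (Fin N) (Fin N) ℂ) (C D : Matrix (Fin M) (Fin N) ℂ)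
    (η : ℂ) (z₀ g : Fin N → ℂ)
    (hker1 : (η • (1 : Matrix (Fin N) (Fin N) ℂ) - A).mulVec z₀ = g)
    (hker2 : C.mulVec z₀ + D.mulVec g = 0)
    (z : ℝ → Fin N → ℂ)
    (hz : ∀ (t : ℝ) (i : Fin N), HasDerivAt (fun s : ℝ => z s i) (A.mulVec (z t) i) t) :
    ∀ t : ℝ,
      (∀ i : Fin N,
        HasDerivAt (fun s : ℝ => z s i + Complex.exp (η * (s : ℂ)) * z₀ i)
          (A.mulVec (fun j => z t j + Complex.exp (η * (t : ℂ)) * z₀ j) i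
            + Complex.exp (η * (t : ℂ)) * g i) t) ∧
      C.mulVec (fun j => z t j + Complex.exp (η * (t : ℂ)) * z₀ j)
          + D.mulVec (fun j => Complex.exp (η * (t : ℂ)) * g j)
        = C.mulVec (z t) := by
  intro t
  refine ⟨fun i => ?_, ZeroDynamics.output_shift_eq hker2 (z t) _⟩
  refine ((hz t i).add ((hasDerivAt_cexp_const_mul_ofReal η t).mul_const (z₀ i))).congr_deriv ?_
  exact (congrFun (ZeroDynamics.mulVec_shift_add_input hker1 (z t) _) i).symm
end

section
/- Let A and Â be N×N real matrices, let C be an M×N real matrix, let z₁ ∈ ℝ^N, and let T > 0. Define ê(t) := ∫₀ᵗ e^{Â(t−s)}·(Â − A)·e^{As}·z₁ ds for t ≥ 0 (so ê is the solution of ê'(t) = Â·ê(t) + (Â − A)·e^{At}z₁ with ê(0) = 0). Then C·ê(t) = 0 for all t ∈ [0, T) if and only if for every integer d ≥ 0 one has Σ_{l=0}^{d} C·Â^l·(Â − A)·A^{d−l}·z₁ = 0. -/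
open Matrix NormedSpace

attribute [local instance] Matrix.linftyOpNormedAddCommGroup Matrix.linftyOpNormedRing
  Matrix.linftyOpNormedAlgebra

section Aux

variable {N M : ℕ}

/-- `X ↦ C ⬝ X ⬝ z` as a continuous linear map in the matrix `X`. -/
noncomputable def mvCLM (C : Matrix (Fin M) (Fin N) ℝ) (z : Fin N → ℝ) :
    Matrix (Fin N) (Fin N) ℝ →L[ℝ] (Fin M → ℝ) :=
  LinearMap.toContinuousLinearMap
    { toFun := fun X => C.mulVec (X.mulVec z)
      map_add' := fun X Y => by
        simp only [Matrix.add_mulVec, Matrix.mulVec_add]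
      map_smul' := fun c X => by
        simp only [Matrix.smul_mulVec, RingHom.id_apply]
        rw [Matrix.mulVec_smul] }

lemma mvCLM_apply (C : Matrix (Fin M) (Fin N) ℝ) (z : Fin N → ℝ) (X : Matrix (Fin N) (Fin N) ℝ) :
    mvCLM C z X = C.mulVec (X.mulVec z) := rfl

lemma closed_form (A Ahat : Matrix (Fin N) (Fin N) ℝ) (z₁ : Fin N → ℝ) (t : ℝ) :
    (∫ s in (0:ℝ)..t, (exp ((t - s) • Ahat)).mulVec
        ((Ahat - A).mulVec ((exp (s • A)).mulVec z₁)))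
      = (exp (t • Ahat) - exp (t • A)).mulVec z₁ := by
  set Ψ : ℝ → Matrix (Fin N) (Fin N) ℝ :=
    fun s => exp ((t - s) • Ahat) * (Ahat - A) * exp (s • A) with hΨ
  have hΨcont : Continuous Ψ := by
    apply Continuous.mul
    apply Continuous.mul
    · exact exp_continuous.comp ((continuous_const.sub continuous_id).smul continuous_const)
    · exact continuous_const
    · exact exp_continuous.comp (continuous_id.smul continuous_const)
  have hderiv : ∀ s : ℝ, HasDerivAt
      (fun s => exp ((t - s) • Ahat) * exp (s • A)) (-Ψ s) s := by
    intro s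
    have h1 : HasDerivAt (fun s : ℝ => exp ((t - s) • Ahat))
        ((-1 : ℝ) • (exp ((t - s) • Ahat) * Ahat)) s := by
      have hin : HasDerivAt (fun s : ℝ => t - s) (-1) s := by
        simpa using (hasDerivAt_id s).const_sub t
      exact (hasDerivAt_exp_smul_const (𝕂 := ℝ) Ahat (t - s)).scomp s hin
    have h2 : HasDerivAt (fun s : ℝ => exp (s • A)) (A * exp (s • A)) s := by
      exact hasDerivAt_exp_smul_const' (𝕂 := ℝ) A s
    have := h1.mul h2
    refine this.congr_deriv ?_
    simp only [hΨ, neg_one_smul]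
    noncomm_ring
  have hFTC := intervalIntegral.integral_eq_sub_of_hasDerivAt
      (f := fun s => exp ((t - s) • Ahat) * exp (s • A)) (f' := fun s => -Ψ s)
      (a := 0) (b := t) (fun s _ => hderiv s)
      ((hΨcont.neg).intervalIntegrable 0 t)
  have hInt : (∫ s in (0:ℝ)..t, Ψ s) = exp (t • Ahat) - exp (t • A) := by
    rw [intervalIntegral.integral_neg] at hFTC
    simp only [sub_self, sub_zero, zero_smul, exp_zero, one_mul, mul_one] at hFTC
    simpa [neg_sub, neg_neg, eq_comm] using congrArg Neg.neg hFTC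
  calc (∫ s in (0:ℝ)..t, (exp ((t - s) • Ahat)).mulVec
        ((Ahat - A).mulVec ((exp (s • A)).mulVec z₁)))
      = ∫ s in (0:ℝ)..t, mvCLM 1 z₁ (Ψ s) := by
        congr 1; funext s
        simp [mvCLM_apply, Matrix.mulVec_mulVec, hΨ, Matrix.one_mul, mul_assoc]
    _ = mvCLM 1 z₁ (∫ s in (0:ℝ)..t, Ψ s) :=
        (mvCLM 1 z₁).intervalIntegral_comp_comm (hΨcont.intervalIntegrable 0 t)
    _ = (exp (t • Ahat) - exp (t • A)).mulVec z₁ := by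
        rw [hInt, mvCLM_apply, Matrix.one_mulVec]

lemma telescope (A Ahat : Matrix (Fin N) (Fin N) ℝ) (d : ℕ) :
    ∑ l ∈ Finset.range (d + 1), Ahat ^ l * (Ahat - A) * A ^ (d - l)
      = Ahat ^ (d + 1) - A ^ (d + 1) := by
  have h := Finset.sum_range_sub (fun l => Ahat ^ l * A ^ (d + 1 - l)) (d + 1)
  simp only [Nat.sub_self, pow_zero, mul_one, Nat.sub_zero, one_mul] at h
  rw [← h]
  apply Finset.sum_congr rfl
  intro l hl
  have hl' : l ≤ d := Nat.lt_succ_iff.mp (Finset.mem_range.mp hl)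
  have e1 : d + 1 - l = (d - l) + 1 := by omega
  have e2 : d + 1 - (l + 1) = d - l := by omega
  rw [e1, e2, pow_succ, pow_succ']
  noncomm_ring

lemma sum_eq (C : Matrix (Fin M) (Fin N) ℝ) (A Ahat : Matrix (Fin N) (Fin N) ℝ)
    (z₁ : Fin N → ℝ) (d : ℕ) :
    ∑ l ∈ Finset.range (d + 1), (C * Ahat ^ l * (Ahat - A) * A ^ (d - l)).mulVec z₁
      = mvCLM C z₁ (Ahat ^ (d + 1) - A ^ (d + 1)) := by
  rw [← telescope A Ahat d, map_sum]
  apply Finset.sum_congr rfl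
  intro l _
  simp only [mvCLM_apply, Matrix.mulVec_mulVec, Matrix.mul_assoc]

lemma hasDerivAt_H (A Ahat : Matrix (Fin N) (Fin N) ℝ) (k : ℕ) (t : ℝ) :
    HasDerivAt (fun t : ℝ => Ahat ^ k * exp (t • Ahat) - A ^ k * exp (t • A))
      (Ahat ^ (k + 1) * exp (t • Ahat) - A ^ (k + 1) * exp (t • A)) t := by
  have h1 := (hasDerivAt_exp_smul_const' (𝕂 := ℝ) Ahat t).const_mul (Ahat ^ k)
  have h2 := (hasDerivAt_exp_smul_const' (𝕂 := ℝ) A t).const_mul (A ^ k)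
  refine (h1.sub h2).congr_deriv ?_
  simp [pow_succ, mul_assoc]
  rfl

end Aux

/-- Proposition 3: the forced error `ê(t) = ∫₀ᵗ e^{Â(t−s)} (Â − A) e^{As} z₁ ds` has
identically zero output on `[0, T)` iff all the stacked derivative conditions hold. -/
theorem stmt_1 {N M : ℕ}
    (A Ahat : Matrix (Fin N) (Fin N) ℝ) (C : Matrix (Fin M) (Fin N) ℝ)
    (z₁ : Fin N → ℝ) (T : ℝ) (hT : 0 < T)
    (e : ℝ → Fin N → ℝ)
    (he : ∀ t : ℝ, e t = ∫ s in (0:ℝ)..t,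
      (NormedSpace.exp ((t - s) • Ahat)).mulVec
        ((Ahat - A).mulVec ((NormedSpace.exp (s • A)).mulVec z₁))) :
    (∀ t ∈ Set.Ico (0:ℝ) T, C.mulVec (e t) = 0) ↔
      (∀ d : ℕ, ∑ l ∈ Finset.range (d + 1),
        (C * Ahat ^ l * (Ahat - A) * A ^ (d - l)).mulVec z₁ = 0) := by
  set v : ℕ → ℝ → (Fin M → ℝ) := fun k t =>
    mvCLM C z₁ (Ahat ^ k * exp (t • Ahat) - A ^ k * exp (t • A)) with hv
  have hvderiv : ∀ k t, HasDerivAt (v k) (v (k + 1) t) t := fun k t =>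
    ((mvCLM C z₁).hasFDerivAt).comp_hasDerivAt t (hasDerivAt_H A Ahat k t)
  have hCe : ∀ t, C.mulVec (e t) = v 0 t := by
    intro t
    rw [he t, closed_form]
    simp [hv, mvCLM_apply]
  have hvk0 : ∀ k, v k 0 = mvCLM C z₁ (Ahat ^ k - A ^ k) := by
    intro k
    simp [hv]
  constructor
  · intro hzero d
    have h0 : ∀ t ∈ Set.Ico (0:ℝ) T, v 0 t = 0 := fun t ht => (hCe t) ▸ hzero t ht
    have han : AnalyticOnNhd ℝ (v 0) Set.univ := by
      intro t _
      have hsm1 : AnalyticAt ℝ (fun u : ℝ => u • A) t :=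
        (((ContinuousLinearMap.id ℝ ℝ).smulRight A).analyticAt t).congr
          (by filter_upwards with x; rfl)
      have hsm2 : AnalyticAt ℝ (fun u : ℝ => u • Ahat) t :=
        (((ContinuousLinearMap.id ℝ ℝ).smulRight Ahat).analyticAt t).congr
          (by filter_upwards with x; rfl)
      have hA : AnalyticAt ℝ (fun u : ℝ => exp (u • A)) t :=
        AnalyticAt.comp (exp_analytic _) hsm1
      have hAh : AnalyticAt ℝ (fun u : ℝ => exp (u • Ahat)) t :=
        AnalyticAt.comp (exp_analytic _) hsm2
      have hdiff : AnalyticAt ℝ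
          (fun u : ℝ => Ahat ^ 0 * exp (u • Ahat) - A ^ 0 * exp (u • A)) t := by
        simp only [pow_zero, one_mul]
        exact hAh.sub hA
      exact AnalyticAt.comp ((mvCLM C z₁).analyticAt _) hdiff
    have hev : v 0 =ᶠ[nhds (T / 2)] 0 := by
      have hmem : Set.Ioo (0:ℝ) T ∈ nhds (T / 2) :=
        Ioo_mem_nhds (by linarith) (by linarith)
      filter_upwards [hmem] with x hx
      exact h0 x ⟨le_of_lt hx.1, hx.2⟩
    have hall : ∀ t, v 0 t = 0 := fun t =>
      han.eqOn_zero_of_preconnected_of_eventuallyEq_zero isPreconnected_univ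
        (Set.mem_univ (T / 2)) hev (Set.mem_univ t)
    have hk : ∀ k, ∀ t, v k t = 0 := by
      intro k
      induction k with
      | zero => exact hall
      | succ k ih =>
        intro t
        have hd : v (k + 1) t = deriv (v k) t := ((hvderiv k t).deriv).symm
        rw [hd, show v k = fun _ : ℝ => (0 : Fin M → ℝ) from funext ih]
        simp
    rw [sum_eq, ← hvk0]
    exact hk (d + 1) 0
  · intro hd t ht
    have hc : ∀ k : ℕ, mvCLM C z₁ (Ahat ^ k - A ^ k) = 0 := by
      intro k
      cases k with
      | zero => simp
      | succ d => rw [← sum_eq]; exact hd d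
    rw [hCe t, hv]
    simp only [pow_zero, one_mul]
    simp only [exp_eq_tsum (𝕂 := ℝ)]
    have s1 : Summable (fun n : ℕ => ((n.factorial : ℝ))⁻¹ • (t • Ahat) ^ n) :=
      expSeries_summable' (𝕂 := ℝ) (t • Ahat)
    have s2 : Summable (fun n : ℕ => ((n.factorial : ℝ))⁻¹ • (t • A) ^ n) :=
      expSeries_summable' (𝕂 := ℝ) (t • A)
    rw [← Summable.tsum_sub s1 s2, (mvCLM C z₁).map_tsum (s1.sub s2)]
    have hterm : ∀ n : ℕ,
        mvCLM C z₁ (((n.factorial : ℝ))⁻¹ • (t • Ahat) ^ n - ((n.factorial : ℝ))⁻¹ • (t • A) ^ n) = 0 := by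
      intro n
      have hx : ((t • Ahat) ^ n - (t • A) ^ n) = t ^ n • (Ahat ^ n - A ^ n) := by
        rw [smul_pow, smul_pow, smul_sub]
      rw [← smul_sub, hx, _root_.map_smul, _root_.map_smul, hc n, smul_zero, smul_zero]
    simp only [hterm, tsum_zero]
end

section
/- Let L be an n×n real symmetric positive semidefinite matrix with L·1ₙ = 0 whose kernel equals span{1ₙ} (i.e., L is the Laplacian matrix of a connected weighted undirected graph), and let Ĉ be an n×n real diagonal matrix with nonnegative diagonal entries, Ĉ ≠ 0. Then the 2n×2n block matrix [[0_{n×n}, I_n],[−(L + Ĉ), −I_n]] is Hurwitz: every complex eigenvalue of this matrix has strictly negative real part. -/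
open Matrix

private lemma quad_re {n : ℕ} (K : Matrix (Fin n) (Fin n) ℝ) (x : Fin n → ℂ) :
    (star x ⬝ᵥ (K.map Complex.ofReal) *ᵥ x).re
      = (fun i => (x i).re) ⬝ᵥ K *ᵥ (fun i => (x i).re)
        + (fun i => (x i).im) ⬝ᵥ K *ᵥ (fun i => (x i).im) := by
  simp only [dotProduct, mulVec, Matrix.map_apply, Finset.mul_sum, Complex.re_sum,
    Pi.star_apply]
  rw [← Finset.sum_add_distrib]
  refine Finset.sum_congr rfl fun i _ => ?_
  rw [← Finset.sum_add_distrib]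
  refine Finset.sum_congr rfl fun j _ => ?_
  simp [Complex.mul_re, Complex.mul_im]

private lemma quad_im {n : ℕ} (K : Matrix (Fin n) (Fin n) ℝ) (hK : Kᵀ = K)
    (x : Fin n → ℂ) :
    (star x ⬝ᵥ (K.map Complex.ofReal) *ᵥ x).im = 0 := by
  have hsym : ∀ a b : Fin n → ℝ, a ⬝ᵥ K *ᵥ b = b ⬝ᵥ K *ᵥ a := by
    intro a b
    rw [dotProduct_mulVec, ← Matrix.mulVec_transpose, hK, dotProduct_comm]
  have h : (star x ⬝ᵥ (K.map Complex.ofReal) *ᵥ x).im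
      = (fun i => (x i).re) ⬝ᵥ K *ᵥ (fun i => (x i).im)
        - (fun i => (x i).im) ⬝ᵥ K *ᵥ (fun i => (x i).re) := by
    simp only [dotProduct, mulVec, Matrix.map_apply, Finset.mul_sum, Complex.im_sum,
      Pi.star_apply]
    rw [← Finset.sum_sub_distrib]
    refine Finset.sum_congr rfl fun i _ => ?_
    rw [← Finset.sum_sub_distrib]
    refine Finset.sum_congr rfl fun j _ => ?_
    simp [Complex.mul_re, Complex.mul_im]
    ring
  rw [h, hsym]
  ring

private lemma eigvec_of_spectrum {m : Type*} [Fintype m] [DecidableEq m]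
    (M : Matrix m m ℂ) (μ : ℂ) (h : μ ∈ spectrum ℂ M) :
    ∃ v : m → ℂ, v ≠ 0 ∧ M.mulVec v = μ • v := by
  rw [← AlgEquiv.spectrum_eq (Matrix.toLinAlgEquiv' : Matrix m m ℂ ≃ₐ[ℂ] _) M,
    ← Module.End.hasEigenvalue_iff_mem_spectrum] at h
  obtain ⟨v, hv⟩ := h.exists_hasEigenvector
  refine ⟨v, hv.right, ?_⟩
  simpa [Matrix.toLinAlgEquiv'_apply] using hv.apply_eq_smul

/-- Lemma 3: if `L` is a PSD symmetric matrix with `L 1ₙ = 0` and kernel exactly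
`span{1ₙ}`, and `Ĉ = diag(d)` is nonnegative diagonal and nonzero, then the block matrix
`[[0, I],[−(L+Ĉ), −I]]` is Hurwitz. -/
theorem stmt_3 {n : ℕ}
    (L : Matrix (Fin n) (Fin n) ℝ)
    (hL : L.PosSemidef)
    (hL1 : L.mulVec (fun _ => (1:ℝ)) = 0)
    (hker : LinearMap.ker L.mulVecLin = Submodule.span ℝ {(fun _ => (1:ℝ) : Fin n → ℝ)})
    (d : Fin n → ℝ) (hd : ∀ i, 0 ≤ d i) (hd0 : d ≠ 0) :
    ∀ μ ∈ spectrum ℂ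
      ((Matrix.fromBlocks (0 : Matrix (Fin n) (Fin n) ℝ) (1 : Matrix (Fin n) (Fin n) ℝ)
        (-(L + Matrix.diagonal d)) (-(1 : Matrix (Fin n) (Fin n) ℝ))).map Complex.ofReal),
      μ.re < 0 := by
  intro μ hμ
  set K : Matrix (Fin n) (Fin n) ℝ := L + Matrix.diagonal d with hKdef
  have hDpsd : (Matrix.diagonal d).PosSemidef :=
    Matrix.PosSemidef.diagonal (by intro i; exact hd i)
  have hK : K.PosSemidef := hL.add hDpsd
  have hKsym : Kᵀ = K := by
    have h := hK.1
    rw [Matrix.IsHermitian] at h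
    ext i j
    have := congrFun (congrFun h i) j
    simpa [Matrix.conjTranspose_apply] using this
  -- real positive definiteness of K
  have hPD : ∀ v : Fin n → ℝ, v ⬝ᵥ K *ᵥ v = 0 → v = 0 := by
    intro v hv0
    have hsplit : v ⬝ᵥ K *ᵥ v = v ⬝ᵥ L *ᵥ v + v ⬝ᵥ (Matrix.diagonal d) *ᵥ v := by
      rw [hKdef, Matrix.add_mulVec, dotProduct_add]
    have hLv : (0:ℝ) ≤ v ⬝ᵥ L *ᵥ v := by simpa using hL.dotProduct_mulVec_nonneg v
    have hDv : (0:ℝ) ≤ v ⬝ᵥ (Matrix.diagonal d) *ᵥ v := by simpa using hDpsd.dotProduct_mulVec_nonneg v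
    have hLv0 : v ⬝ᵥ L *ᵥ v = 0 := by rw [hsplit] at hv0; linarith
    have hDv0 : v ⬝ᵥ (Matrix.diagonal d) *ᵥ v = 0 := by rw [hsplit] at hv0; linarith
    have hLveq : L *ᵥ v = 0 := by
      have := (hL.dotProduct_mulVec_zero_iff v).mp (by simpa using hLv0)
      exact this
    have hmem : v ∈ LinearMap.ker L.mulVecLin := by
      simp [LinearMap.mem_ker, Matrix.mulVecLin_apply, hLveq]
    rw [hker, Submodule.mem_span_singleton] at hmem
    obtain ⟨c, hc⟩ := hmem
    have hvc : ∀ i, v i = c := by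
      intro i
      have := congrFun hc i
      simpa using this.symm
    have hDsum : ∑ i, d i * (v i * v i) = 0 := by
      have : v ⬝ᵥ (Matrix.diagonal d) *ᵥ v = ∑ i, d i * (v i * v i) := by
        simp [dotProduct, Matrix.mulVec_diagonal]
        exact Finset.sum_congr rfl fun i _ => by ring
      rw [← this]; exact hDv0
    obtain ⟨i0, hi0⟩ : ∃ i, d i ≠ 0 := Function.ne_iff.mp hd0
    have hterm : ∀ i ∈ Finset.univ, (0:ℝ) ≤ d i * (v i * v i) := by
      intro i _
      exact mul_nonneg (hd i) (mul_self_nonneg _)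
    have h0 : d i0 * (v i0 * v i0) = 0 :=
      (Finset.sum_eq_zero_iff_of_nonneg hterm).mp hDsum i0 (Finset.mem_univ _)
    have hc0 : c = 0 := by
      rcases mul_eq_zero.mp h0 with h | h
      · exact absurd h hi0
      · have := mul_self_eq_zero.mp h
        rw [hvc i0] at this; exact this
    funext i
    rw [hvc i, hc0]; rfl
  -- rewrite block matrix over ℂ
  set Kc : Matrix (Fin n) (Fin n) ℂ := K.map Complex.ofReal with hKcdef
  have hMmap : (Matrix.fromBlocks (0 : Matrix (Fin n) (Fin n) ℝ) (1 : Matrix (Fin n) (Fin n) ℝ)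
      (-(L + Matrix.diagonal d)) (-(1 : Matrix (Fin n) (Fin n) ℝ))).map Complex.ofReal
      = Matrix.fromBlocks 0 1 (-Kc) (-1) := by
    have h0 : (0 : Matrix (Fin n) (Fin n) ℝ).map Complex.ofReal = 0 := by
      ext i j; simp
    have h1m : (1 : Matrix (Fin n) (Fin n) ℝ).map Complex.ofReal = 1 := by
      ext i j; simp [Matrix.one_apply, apply_ite]
    have hneg1 : (-(1 : Matrix (Fin n) (Fin n) ℝ)).map Complex.ofReal = -1 := by
      ext i j; simp [Matrix.one_apply, apply_ite]
    have hnegK : (-K).map Complex.ofReal = -Kc := by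
      ext i j; simp [hKcdef]
    rw [Matrix.fromBlocks_map, h0, h1m, hnegK, hneg1]
  rw [hMmap] at hμ
  obtain ⟨v, hv0, hvM⟩ := eigvec_of_spectrum _ μ hμ
  set x : Fin n → ℂ := v ∘ Sum.inl with hxdef
  set y : Fin n → ℂ := v ∘ Sum.inr with hydef
  have hv' : v = Sum.elim x y := (Sum.elim_comp_inl_inr v).symm
  rw [hv', Matrix.fromBlocks_mulVec] at hvM
  have hy : ∀ i, y i = μ * x i := by
    intro i
    have := congrFun hvM (Sum.inl i)
    simpa using this
  have hx2 : ∀ i, -(Kc *ᵥ x) i - y i = μ * y i := by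
    intro i
    have := congrFun hvM (Sum.inr i)
    simpa [Matrix.neg_mulVec, sub_eq_add_neg] using this
  have hxne : x ≠ 0 := by
    intro hx0
    apply hv0
    rw [hv']
    funext i
    rcases i with i | i
    · simp [congrFun hx0 i]
    · simp [hy i, congrFun hx0 i]
  set lam : ℂ := -(μ ^ 2 + μ) with hlamdef
  have hKx : Kc *ᵥ x = lam • x := by
    funext i
    have h1 := hx2 i
    rw [hy i] at h1
    simp only [Pi.smul_apply, smul_eq_mul, hlamdef, Pi.neg_apply]
    linear_combination -h1
  -- the scalar quantities
  set T : ℝ := ∑ i, Complex.normSq (x i) with hTdef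
  have hT : star x ⬝ᵥ x = (T : ℂ) := by
    rw [hTdef, Complex.ofReal_sum]
    refine Finset.sum_congr rfl fun i _ => ?_
    simp [Complex.star_def, mul_comm, Complex.mul_conj]
  have hTpos : 0 < T := by
    obtain ⟨i1, hxi⟩ : ∃ i, x i ≠ 0 := Function.ne_iff.mp hxne
    exact Finset.sum_pos' (fun i _ => Complex.normSq_nonneg _)
      ⟨i1, Finset.mem_univ _, Complex.normSq_pos.mpr hxi⟩
  have hs : star x ⬝ᵥ Kc *ᵥ x = lam * (T : ℂ) := by
    rw [hKx, dotProduct_smul, hT, smul_eq_mul]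
  have him : lam.im = 0 := by
    have h0 : (star x ⬝ᵥ Kc *ᵥ x).im = 0 := quad_im K hKsym x
    rw [hs] at h0
    simp only [Complex.mul_im, Complex.ofReal_im, Complex.ofReal_re, mul_zero,
      zero_add, add_zero] at h0
    rcases mul_eq_zero.mp h0 with h | h
    · exact h
    · exact absurd h (ne_of_gt hTpos)
  have hre : 0 < lam.re := by
    have h0 : (star x ⬝ᵥ Kc *ᵥ x).re
        = (fun i => (x i).re) ⬝ᵥ K *ᵥ (fun i => (x i).re)
          + (fun i => (x i).im) ⬝ᵥ K *ᵥ (fun i => (x i).im) := quad_re K x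
    rw [hs] at h0
    simp only [Complex.mul_re, Complex.ofReal_im, Complex.ofReal_re, mul_zero,
      sub_zero] at h0
    set qa : ℝ := (fun i => (x i).re) ⬝ᵥ K *ᵥ (fun i => (x i).re) with hqadef
    set qb : ℝ := (fun i => (x i).im) ⬝ᵥ K *ᵥ (fun i => (x i).im) with hqbdef
    have hqa0 : 0 ≤ qa := by simpa [hqadef] using hK.dotProduct_mulVec_nonneg (fun i => (x i).re)
    have hqb0 : 0 ≤ qb := by simpa [hqbdef] using hK.dotProduct_mulVec_nonneg (fun i => (x i).im)
    have hne : qa + qb ≠ 0 := by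
      intro hsum
      have hqa : qa = 0 := by linarith
      have hqb : qb = 0 := by linarith
      have ha := hPD _ hqa
      have hb := hPD _ hqb
      apply hxne
      funext i
      exact Complex.ext (congrFun ha i) (congrFun hb i)
    have hpos : 0 < qa + qb := lt_of_le_of_ne (by linarith) (Ne.symm hne)
    nlinarith [hTpos, h0]
  -- conclude
  have hlim : lam.im = -(2 * μ.re * μ.im + μ.im) := by
    simp only [hlamdef, Complex.neg_im, Complex.add_im, pow_two, Complex.mul_im]
    all_goals ring_nf
  have hlre : lam.re = -(μ.re * μ.re - μ.im * μ.im + μ.re) := by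
    simp only [hlamdef, Complex.neg_re, Complex.add_re, pow_two, Complex.mul_re]
    all_goals ring_nf
  have he1 : μ.im * (2 * μ.re + 1) = 0 := by
    rw [hlim] at him
    linear_combination -him
  have he2 : μ.re * μ.re - μ.im * μ.im + μ.re < 0 := by
    rw [hlre] at hre
    linarith
  rcases mul_eq_zero.mp he1 with h | h
  · nlinarith [he2, h]
  · linarith
end

section
/- Let L be an n×n real symmetric matrix with L·1ₙ = 0, and suppose there is an orthogonal matrix Q with QᵀLQ = diag(0, λ₂, …, λₙ) where λ₂, …, λₙ are distinct and strictly positive. Let M ⊆ {1, …, n} be nonempty, and suppose there exists i ∈ M such that every entry of the i-th row of Q is nonzero. Let C₂ be the |M|×n matrix whose rows are c_i·e_iᵀ for i ∈ M with c_i ≠ 0, let C be the |M|×2n matrix [0_{|M|×n} | C₂] (full observation of the monitored agents' velocities), and let A be the 2n×2n block matrix [[0_{n×n}, I_n],[−L, −I_n]]. Then the kernel of the observability matrix obtained by stacking C, CA, CA², …, CA^{2n−1} equals span{(1ₙ, 0ₙ)}, the line spanned by the vector whose first n coordinates are all ones and last n coordinates are all zeros. -/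
open Matrix


lemma sum_mulVec' {m p : Type*} [Fintype m] [Fintype p] (s : Finset ℕ)
    (F : ℕ → Matrix p m ℂ) (z : m → ℂ) :
    (∑ x ∈ s, F x) *ᵥ z = ∑ x ∈ s, (F x) *ᵥ z := by
  induction s using Finset.induction with
  | empty => simp [Matrix.zero_mulVec]
  | insert _ _ h ih => rw [Finset.sum_insert h, Finset.sum_insert h, Matrix.add_mulVec, ih]

lemma obs_ext {m p : Type*} [Fintype m] [DecidableEq m] [Fintype p]
    (A : Matrix m m ℂ) (C : Matrix p m ℂ) (z : m → ℂ)
    (h : ∀ k, k < Fintype.card m → (C * A ^ k).mulVec z = 0) :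
    ∀ k, (C * A ^ k).mulVec z = 0 := by
  set N := Fintype.card m with hN
  have hch := Matrix.aeval_self_charpoly A
  have hc1 : A.charpoly.coeff A.charpoly.natDegree = 1 :=
    (Matrix.charpoly_monic A).coeff_natDegree
  rw [Polynomial.aeval_eq_sum_range, Matrix.charpoly_natDegree_eq_dim] at hch
  rw [Matrix.charpoly_natDegree_eq_dim] at hc1
  rw [← hN] at hch hc1
  rw [Finset.sum_range_succ, hc1, one_smul] at hch
  have hpow : A ^ N = -∑ x ∈ Finset.range N, A.charpoly.coeff x • A ^ x := by
    linear_combination (norm := module) hch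
  intro k
  induction k using Nat.strong_induction_on with
  | _ k ih =>
    rcases lt_or_ge k N with hk | hk
    · exact h k hk
    · obtain ⟨j, rfl⟩ : ∃ j, k = N + j := ⟨k - N, (Nat.add_sub_cancel' hk).symm⟩
      have key : C * A ^ (N + j)
          = ∑ x ∈ Finset.range N, (-(A.charpoly.coeff x)) • (C * A ^ (x + j)) := by
        rw [pow_add, hpow, Matrix.neg_mul, Matrix.mul_neg, Finset.sum_mul, Matrix.mul_sum,
          ← Finset.sum_neg_distrib]
        refine Finset.sum_congr rfl fun x _ => ?_
        rw [smul_mul_assoc, ← pow_add, Matrix.mul_smul, neg_smul]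
      rw [key, sum_mulVec']
      refine Finset.sum_eq_zero fun x hx => ?_
      rw [Matrix.smul_mulVec, ih (x + j) (by simp at hx; omega), smul_zero]


lemma rowC' {R : Type*} [CommRing R] {n : ℕ} {M : Finset (Fin n)} (c : Fin n → R)
    (C : Matrix {i // i ∈ M} (Fin n ⊕ Fin n) R)
    (hC : ∀ (i : {i // i ∈ M}) (j : Fin n ⊕ Fin n),
      C i j = Sum.elim (fun _ : Fin n => (0:R))
        (fun k : Fin n => if k = (i : Fin n) then c (i : Fin n) else 0) j)
    (w : Fin n ⊕ Fin n → R) (i : {i // i ∈ M}) :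
    (C *ᵥ w) i = c i * w (Sum.inr i) := by
  simp only [Matrix.mulVec, dotProduct]
  rw [Fintype.sum_sum_type]
  simp only [hC, Sum.elim_inl, Sum.elim_inr, zero_mul, Finset.sum_const_zero, zero_add,
    ite_mul, zero_mul]
  rw [Finset.sum_ite_eq' Finset.univ (i : Fin n) (fun k => c i * w (Sum.inr k))]
  simp

lemma mapVec {α β : Type*} [Fintype β] (Mx : Matrix α β ℝ) (w : β → ℝ) :
    (Mx.map Complex.ofRealHom) *ᵥ (fun j => ((w j : ℝ) : ℂ)) = fun i => (((Mx *ᵥ w) i : ℝ) : ℂ) := by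
  funext i
  rw [show (fun j => ((w j : ℝ) : ℂ)) = (Complex.ofRealHom ∘ w) from rfl,
    ← RingHom.map_mulVec]
  rfl

lemma eig_struct {n : ℕ} (Qc Lc : Matrix (Fin n) (Fin n) ℂ) (hQc : Qcᵀ * Qc = 1)
    (d : Fin n → ℂ) (hd : Function.Injective d)
    (hdiag : Qcᵀ * Lc * Qc = Matrix.diagonal d)
    (lc : ℂ) (x : Fin n → ℂ) (hx : Lc *ᵥ x = lc • x) (hx0 : x ≠ 0) :
    ∃ j0 b, b ≠ 0 ∧ (∀ k, x k = b * Qc k j0) ∧ lc = d j0 := by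
  have hQQ : Qc * Qcᵀ = 1 := mul_eq_one_comm.mp hQc
  set w : Fin n → ℂ := Qcᵀ *ᵥ x with hw
  have hxw : x = Qc *ᵥ w := by rw [hw, Matrix.mulVec_mulVec, hQQ, Matrix.one_mulVec]
  have hDw : Matrix.diagonal d *ᵥ w = lc • w := by
    rw [← hdiag, ← Matrix.mulVec_mulVec, ← hxw, ← Matrix.mulVec_mulVec, hx,
      Matrix.mulVec_smul]
  have hcomp : ∀ j, d j * w j = lc * w j := by
    intro j
    have := congrFun hDw j
    rwa [Matrix.mulVec_diagonal, Pi.smul_apply, smul_eq_mul] at this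
  have hw0 : w ≠ 0 := by
    intro h; exact hx0 (by rw [hxw, h, Matrix.mulVec_zero])
  obtain ⟨j0, hj0⟩ : ∃ j0, w j0 ≠ 0 := by
    by_contra h; push_neg at h; exact hw0 (funext h)
  have hlc : lc = d j0 := by
    have := hcomp j0
    exact (mul_right_cancel₀ hj0 this.symm)
  have hwz : ∀ j, j ≠ j0 → w j = 0 := by
    intro j hj
    by_contra h
    exact hj (hd (mul_right_cancel₀ h ((hcomp j).trans (by rw [hlc]))))
  refine ⟨j0, w j0, hj0, fun k => ?_, hlc⟩
  have : x k = ∑ j, Qc k j * w j := by rw [hxw]; rfl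
  rw [this]
  rw [Finset.sum_eq_single j0]
  · ring
  · intro j _ hj; rw [hwz j hj, mul_zero]
  · intro h; exact absurd (Finset.mem_univ j0) h

/-- Theorem 1, first bullet (eq. (39)): under full velocity observation of the monitored
agents, the kernel of the stacked observability matrix of `A = [[0, I], [-L, -I]]` equals
`span{(1ₙ, 0ₙ)}`. -/
theorem stmt_6 {n : ℕ} [NeZero n]
    (L Q : Matrix (Fin n) (Fin n) ℝ) (hLsymm : L.IsSymm)
    (hL1 : L.mulVec (fun _ => (1:ℝ)) = 0)
    (hQ : Qᵀ * Q = 1)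
    (lam : Fin n → ℝ) (hlam0 : lam 0 = 0)
    (hlampos : ∀ i : Fin n, i ≠ 0 → 0 < lam i)
    (hlamdist : ∀ i j : Fin n, i ≠ 0 → j ≠ 0 → i ≠ j → lam i ≠ lam j)
    (hdiag : Qᵀ * L * Q = Matrix.diagonal lam)
    (M : Finset (Fin n)) (hM : M.Nonempty)
    (hdef : ∃ i ∈ M, ∀ j, Q i j ≠ 0)
    (c : Fin n → ℝ) (hc : ∀ i ∈ M, c i ≠ 0)
    (C : Matrix {i // i ∈ M} (Fin n ⊕ Fin n) ℝ)
    (hC : ∀ (i : {i // i ∈ M}) (j : Fin n ⊕ Fin n),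
      C i j = Sum.elim (fun _ : Fin n => (0:ℝ))
        (fun k : Fin n => if k = (i : Fin n) then c (i : Fin n) else 0) j)
    (A : Matrix (Fin n ⊕ Fin n) (Fin n ⊕ Fin n) ℝ)
    (hA : A = Matrix.fromBlocks 0 1 (-L) (-1)) :
    {z : Fin n ⊕ Fin n → ℝ | ∀ k : ℕ, k < 2 * n → (C * A ^ k).mulVec z = 0}
      = {z : Fin n ⊕ Fin n → ℝ |
          ∃ a : ℝ, z = Sum.elim (fun _ : Fin n => a) (fun _ : Fin n => (0:ℝ))} := by
  classical
  ext z
  simp only [Set.mem_setOf_eq]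
  constructor
  · intro hz
    set f : ℝ →+* ℂ := Complex.ofRealHom with hfdef
    set Lc : Matrix (Fin n) (Fin n) ℂ := L.map f with hLc
    set Qc : Matrix (Fin n) (Fin n) ℂ := Q.map f with hQcdef
    set Ac : Matrix (Fin n ⊕ Fin n) (Fin n ⊕ Fin n) ℂ := A.map f with hAcdef
    set Cc : Matrix {i // i ∈ M} (Fin n ⊕ Fin n) ℂ := C.map f with hCcdef
    set zc : Fin n ⊕ Fin n → ℂ := fun j => ((z j : ℝ) : ℂ) with hzc
    -- transferred facts
    have hQc : Qcᵀ * Qc = 1 := by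
      rw [hQcdef, ← Matrix.transpose_map, ← Matrix.map_mul, hQ]
      exact Matrix.map_one _ (map_zero f) (map_one f)
    have hdiagc : Qcᵀ * Lc * Qc = Matrix.diagonal (fun j => ((lam j : ℝ) : ℂ)) := by
      rw [hQcdef, hLc, ← Matrix.transpose_map, ← Matrix.map_mul, ← Matrix.map_mul, hdiag,
        Matrix.diagonal_map (map_zero f)]
      rfl
    have hL1c : Lc *ᵥ (fun _ => (1:ℂ)) = 0 := by
      have h := mapVec L (fun _ => (1:ℝ))
      rw [hL1] at h
      rw [hLc]
      have : (fun j => (((1:ℝ)) : ℂ)) = (fun _ : Fin n => (1:ℂ)) := by norm_num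
      rw [← this, show (L.map f) = L.map Complex.ofRealHom from rfl, h]
      funext i; simp
    have hLcsymm : ∀ j k, Lc j k = Lc k j := by
      intro j k
      have := congrFun (congrFun hLsymm j) k
      rw [Matrix.transpose_apply] at this
      simp only [hLc, Matrix.map_apply, this]
    have hAc : Ac = Matrix.fromBlocks 0 1 (-Lc) (-1) := by
      have h0 : (0 : Matrix (Fin n) (Fin n) ℝ).map ⇑f = 0 := by funext i j; simp
      have h1m : (1 : Matrix (Fin n) (Fin n) ℝ).map ⇑f = 1 :=
        Matrix.map_one _ (map_zero f) (map_one f)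
      have hLm : (-L).map ⇑f = -Lc := by funext i j; simp [hLc, Matrix.map_apply]
      have h1n : (-1 : Matrix (Fin n) (Fin n) ℝ).map ⇑f = -1 := by
        funext i j
        by_cases h : i = j <;> simp [Matrix.map_apply, Matrix.one_apply, h]
      rw [hAcdef, hA, Matrix.fromBlocks_map, h0, h1m, hLm, h1n]
    have hAvec : ∀ y : Fin n ⊕ Fin n → ℂ, Ac *ᵥ y
        = Sum.elim (y ∘ Sum.inr) (-(Lc *ᵥ (y ∘ Sum.inl)) - y ∘ Sum.inr) := by
      intro y
      rw [hAc, fromBlocks_mulVec, Matrix.zero_mulVec, Matrix.one_mulVec, Matrix.neg_mulVec,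
        Matrix.neg_mulVec, Matrix.one_mulVec, zero_add, sub_eq_add_neg]
    set e : Fin n ⊕ Fin n → ℂ := Sum.elim (fun _ : Fin n => (1:ℂ)) (fun _ => 0) with he
    have hAe : Ac *ᵥ e = 0 := by
      rw [hAvec]
      have h1 : e ∘ Sum.inl = fun _ : Fin n => (1:ℂ) := rfl
      have h2 : e ∘ Sum.inr = 0 := rfl
      rw [h1, h2, hL1c]
      funext j; cases j <;> simp
    have hCc : ∀ (i : {i // i ∈ M}) (j : Fin n ⊕ Fin n),
        Cc i j = Sum.elim (fun _ : Fin n => (0:ℂ))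
          (fun k : Fin n => if k = (i : Fin n) then ((c (i:Fin n) : ℝ) : ℂ) else 0) j := by
      intro i j
      rw [hCcdef, Matrix.map_apply, hC i j]
      cases j with
      | inl j => simp
      | inr j => simp only [Sum.elim_inr, apply_ite f, map_zero]; rfl
    have hrowc : ∀ (w : Fin n ⊕ Fin n → ℂ) (i : {i // i ∈ M}),
        (Cc *ᵥ w) i = ((c (i:Fin n) : ℝ) : ℂ) * w (Sum.inr i) :=
      fun w i => rowC' (fun i => ((c i : ℝ) : ℂ)) Cc hCc w i
    have hCkillc : ∀ w : Fin n ⊕ Fin n → ℂ, (∀ j, w (Sum.inr j) = 0) → Cc *ᵥ w = 0 := by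
      intro w hw; funext i; rw [hrowc w i, hw, mul_zero]; rfl
    -- observability for all k
    have hobs : ∀ k, (Cc * Ac ^ k) *ᵥ zc = 0 := by
      apply obs_ext
      intro k hk
      rw [Fintype.card_sum, Fintype.card_fin] at hk
      have hzk := hz k (by omega)
      have hpowmap : ∀ k : ℕ, (A ^ k).map ⇑f = (A.map ⇑f) ^ k := by
        intro k
        induction k with
        | zero => rw [pow_zero, pow_zero]; exact Matrix.map_one _ (map_zero f) (map_one f)
        | succ s ih => rw [pow_succ, pow_succ, Matrix.map_mul, ih]
      have hmap : Cc * Ac ^ k = (C * A ^ k).map f := by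
        rw [Matrix.map_mul, hCcdef, hAcdef, hpowmap]
      rw [hmap, hzc, mapVec (C * A ^ k) z, hzk]
      funext i; simp
    -- the submodules
    set W : Submodule ℂ (Fin n ⊕ Fin n → ℂ) :=
      { carrier := {w | ∀ k, (Cc * Ac ^ k) *ᵥ w = 0}
        add_mem' := fun {a b} ha hb k => by
          rw [Matrix.mulVec_add, ha k, hb k, add_zero]
        zero_mem' := fun k => Matrix.mulVec_zero _
        smul_mem' := fun s w hw k => by
          rw [Matrix.mulVec_smul, hw k, smul_zero] } with hW
    have hWmem : ∀ w, w ∈ W ↔ ∀ k, (Cc * Ac ^ k) *ᵥ w = 0 := fun w => Iff.rfl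
    set U : Submodule ℂ (Fin n ⊕ Fin n → ℂ) := Submodule.span ℂ {e} with hU
    have hUmem : ∀ w, w ∈ U ↔ ∃ b : ℂ, w = Sum.elim (fun _ : Fin n => b) (fun _ => (0:ℂ)) := by
      intro w
      rw [hU, Submodule.mem_span_singleton]
      constructor
      · rintro ⟨b, rfl⟩
        exact ⟨b, by funext j; cases j <;> simp [he]⟩
      · rintro ⟨b, rfl⟩
        exact ⟨b, by funext j; cases j <;> simp [he]⟩
    have heW : e ∈ W := by
      intro k
      cases k with
      | zero => rw [pow_zero, Matrix.mul_one]; exact hCkillc e (fun j => rfl)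
      | succ s => rw [pow_succ, ← Matrix.mul_assoc, ← Matrix.mulVec_mulVec, hAe,
          Matrix.mulVec_zero]
    have hWinv : ∀ w ∈ W, Ac.mulVecLin w ∈ W := by
      intro w hw k
      rw [Matrix.mulVecLin_apply, Matrix.mulVec_mulVec, Matrix.mul_assoc, ← pow_succ]
      exact hw (k + 1)
    have hinj : Function.Injective lam := by
      intro i j hij
      by_cases hi : i = 0 <;> by_cases hj : j = 0
      · rw [hi, hj]
      · exfalso; rw [hi, hlam0] at hij; exact absurd hij.symm (ne_of_gt (hlampos j hj))
      · exfalso; rw [hj, hlam0] at hij; exact absurd hij (ne_of_gt (hlampos i hi))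
      · by_contra hne; exact hlamdist i j hi hj hne hij
    have hinjc : Function.Injective (fun j => ((lam j : ℝ) : ℂ)) := by
      intro i j hij
      exact hinj (Complex.ofReal_injective hij)
    have heig : ∀ (lc : ℂ) (x : Fin n → ℂ), Lc *ᵥ x = lc • x → x ≠ 0 →
        ∃ j0 b, b ≠ 0 ∧ (∀ k, x k = b * Qc k j0) ∧ lc = ((lam j0 : ℝ) : ℂ) :=
      fun lc x => eig_struct Qc Lc hQc _ hinjc hdiagc lc x
    -- kernel-of-L vectors are constant
    have hker : ∀ x : Fin n → ℂ, Lc *ᵥ x = 0 → ∃ b : ℂ, x = fun _ => b := by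
      intro x hx
      by_cases hx0 : x = 0
      · exact ⟨0, by rw [hx0]; funext; simp⟩
      obtain ⟨j0, b, hb, hxk, hl⟩ := heig 0 x (by rw [hx, zero_smul]) hx0
      have hone : (fun _ : Fin n => (1:ℂ)) ≠ 0 := by
        intro h
        have := congrFun h 0
        simp at this
      obtain ⟨j1, b1, hb1, hxk1, hl1⟩ := heig 0 (fun _ => 1) (by rw [hL1c, zero_smul]) hone
      have hj0 : j0 = 0 := by
        by_contra h
        have : lam j0 ≠ 0 := ne_of_gt (hlampos j0 h)
        exact this (by exact_mod_cast hl.symm)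
      have hj1 : j1 = 0 := by
        by_contra h
        have : lam j1 ≠ 0 := ne_of_gt (hlampos j1 h)
        exact this (by exact_mod_cast hl1.symm)
      refine ⟨b * b1⁻¹, funext fun k => ?_⟩
      have h1 : b1 * Qc k 0 = 1 := by rw [← hj1, ← hxk1 k]
      have hq : Qc k 0 = b1⁻¹ := by field_simp at h1 ⊢; linear_combination h1
      rw [hxk k, hj0, hq]
    -- main claim : W ≤ U
    have hWU : ∀ w ∈ W, w ∈ U := by
      by_contra hcon
      push_neg at hcon
      obtain ⟨w0', hw0'W, hw0'U⟩ := hcon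
      set U₀ : Submodule ℂ W := U.comap W.subtype with hU₀
      have hU₀mem : ∀ u : W, u ∈ U₀ ↔ (u : Fin n ⊕ Fin n → ℂ) ∈ U := fun u => Iff.rfl
      set T : Module.End ℂ W := (Ac.mulVecLin).restrict hWinv with hT
      have hTcoe : ∀ u : W, (T u : Fin n ⊕ Fin n → ℂ) = Ac *ᵥ (u : Fin n ⊕ Fin n → ℂ) := by
        intro u
        rw [hT, LinearMap.restrict_coe_apply, Matrix.mulVecLin_apply]
      have hTU : U₀ ≤ U₀.comap T := by
        intro u hu
        rw [Submodule.mem_comap, hU₀mem, hTcoe]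
        obtain ⟨b, hb⟩ := Submodule.mem_span_singleton.mp ((hU₀mem u).mp hu)
        rw [← hb, Matrix.mulVec_smul, hAe, smul_zero]
        exact U.zero_mem
      haveI : Nontrivial (W ⧸ U₀) := by
        refine ⟨⟨Submodule.Quotient.mk ⟨w0', hw0'W⟩, 0, ?_⟩⟩
        rw [Ne, Submodule.Quotient.mk_eq_zero]
        exact fun h => hw0'U ((hU₀mem _).mp h)
      obtain ⟨μ, hμ⟩ := Module.End.exists_eigenvalue (Submodule.mapQ U₀ U₀ T hTU)
      obtain ⟨vb, hvb⟩ := hμ.exists_hasEigenvector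
      obtain ⟨w0, hw0mk⟩ := Submodule.Quotient.mk_surjective U₀ vb
      have hsub : T w0 - μ • w0 ∈ U₀ := by
        rw [← Submodule.Quotient.mk_eq_zero, Submodule.Quotient.mk_sub,
          ← Submodule.mapQ_apply U₀ U₀ T (h := hTU), hw0mk, hvb.apply_eq_smul, ← hw0mk,
          ← Submodule.Quotient.mk_smul, sub_self]
      have hw0U : (w0 : Fin n ⊕ Fin n → ℂ) ∉ U := by
        intro h
        apply hvb.2
        rw [← hw0mk, Submodule.Quotient.mk_eq_zero]
        exact (hU₀mem w0).mpr h
      obtain ⟨t, ht⟩ := Submodule.mem_span_singleton.mp ((hU₀mem _).mp hsub)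
      have ht2 : Ac *ᵥ (w0 : Fin n ⊕ Fin n → ℂ) - μ • (w0 : Fin n ⊕ Fin n → ℂ) = t • e := by
        rw [ht, Submodule.coe_sub, Submodule.coe_smul, hTcoe]
      have hAw0 : Ac *ᵥ (w0 : Fin n ⊕ Fin n → ℂ)
          = μ • (w0 : Fin n ⊕ Fin n → ℂ) + t • e := by
        rw [← ht2]; abel
      by_cases hμ0 : μ = 0
      · -- case μ = 0
        rw [hμ0, zero_smul, zero_add] at hAw0
        rw [hAvec] at hAw0
        have hvj : ∀ j, (w0 : Fin n ⊕ Fin n → ℂ) (Sum.inr j) = t := by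
          intro j
          have h := congrFun hAw0 (Sum.inl j)
          simpa [he] using h
        have hLxj : ∀ j, (Lc *ᵥ ((w0 : Fin n ⊕ Fin n → ℂ) ∘ Sum.inl)) j = -t := by
          intro j
          have h := congrFun hAw0 (Sum.inr j)
          simp only [Sum.elim_inr, Pi.smul_apply, he, smul_eq_mul, mul_zero, Pi.sub_apply,
            Pi.neg_apply, Function.comp_apply] at h
          have hvjj := hvj j
          linear_combination -h - hvjj
        have hsumcol : ∀ k' : Fin n, (∑ j, Lc j k') = 0 := by
          intro k'
          have h1 := congrFun hL1c k'
          simp only [Matrix.mulVec, dotProduct, mul_one, Pi.zero_apply] at h1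
          calc ∑ j, Lc j k' = ∑ j, Lc k' j := by
                refine Finset.sum_congr rfl fun j _ => hLcsymm j k'
          _ = 0 := h1
        have ht0 : t = 0 := by
          have h3 : ∑ j, (Lc *ᵥ ((w0 : Fin n ⊕ Fin n → ℂ) ∘ Sum.inl)) j = 0 := by
            simp only [Matrix.mulVec, dotProduct]
            rw [Finset.sum_comm]
            refine Finset.sum_eq_zero fun k' _ => ?_
            rw [← Finset.sum_mul, hsumcol k', zero_mul]
          have h2 : ∑ j : Fin n, (Lc *ᵥ ((w0 : Fin n ⊕ Fin n → ℂ) ∘ Sum.inl)) j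
              = ∑ j : Fin n, (-t : ℂ) :=
            Finset.sum_congr rfl fun j _ => hLxj j
          rw [h3, Finset.sum_const, Finset.card_univ, Fintype.card_fin] at h2
          have hn : (n : ℂ) ≠ 0 := Nat.cast_ne_zero.mpr (NeZero.ne n)
          have h4 := h2.symm
          rw [nsmul_eq_mul] at h4
          rcases mul_eq_zero.mp h4 with h | h
          · exact absurd h hn
          · exact neg_eq_zero.mp h
        have hLx0 : Lc *ᵥ ((w0 : Fin n ⊕ Fin n → ℂ) ∘ Sum.inl) = 0 := by
          funext j; rw [hLxj j, ht0, neg_zero]; rfl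
        obtain ⟨b, hbx⟩ := hker _ hLx0
        apply hw0U
        rw [hUmem]
        refine ⟨b, ?_⟩
        funext j
        cases j with
        | inl j => exact congrFun hbx j
        | inr j =>
          have h := hvj j
          rw [ht0] at h
          exact h
      · -- case μ ≠ 0
        set z' : Fin n ⊕ Fin n → ℂ := (w0 : Fin n ⊕ Fin n → ℂ) + (t/μ) • e with hz'
        have hz'W : z' ∈ W := W.add_mem w0.2 (W.smul_mem _ heW)
        have hAz' : Ac *ᵥ z' = μ • z' := by
          rw [hz', Matrix.mulVec_add, Matrix.mulVec_smul, hAe, smul_zero, add_zero, hAw0,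
            smul_add, smul_smul]
          have : μ * (t / μ) = t := by field_simp
          rw [this]
        have hz'U : z' ∉ U := by
          intro h
          apply hw0U
          have hw0eq : (w0 : Fin n ⊕ Fin n → ℂ) = z' - (t/μ) • e := by
            rw [hz']; abel
          rw [hw0eq]
          exact U.sub_mem h (U.smul_mem _ (Submodule.mem_span_singleton_self e))
        have hz'0 : z' ≠ 0 := fun h => hz'U (by rw [h]; exact U.zero_mem)
        rw [hAvec] at hAz'
        have hvx : ∀ j, z' (Sum.inr j) = μ * z' (Sum.inl j) := by
          intro j
          have h := congrFun hAz' (Sum.inl j)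
          simpa using h
        have hLxc : Lc *ᵥ (z' ∘ Sum.inl) = (-(μ * (1 + μ))) • (z' ∘ Sum.inl) := by
          funext j
          have h := congrFun hAz' (Sum.inr j)
          simp only [Sum.elim_inr, Pi.smul_apply, smul_eq_mul, Pi.sub_apply, Pi.neg_apply,
            Function.comp_apply] at h
          have hvj := hvx j
          simp only [Pi.smul_apply, smul_eq_mul, Function.comp_apply]
          linear_combination -h - (1 + μ) * hvj
        obtain ⟨istar, histar, hQrow⟩ := hdef
        have hobs0 : Cc *ᵥ z' = 0 := by
          have h := hz'W 0
          rwa [pow_zero, Matrix.mul_one] at h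
        have hvi : z' (Sum.inr istar) = 0 := by
          have h := congrFun hobs0 ⟨istar, histar⟩
          rw [hrowc z' ⟨istar, histar⟩] at h
          have hcast : ((c istar : ℝ) : ℂ) ≠ 0 := by
            exact_mod_cast hc istar histar
          simpa [hcast] using h
        have hxi : z' (Sum.inl istar) = 0 := by
          have h := (hvx istar).symm
          rw [hvi] at h
          rcases mul_eq_zero.mp h with hh | hh
          · exact absurd hh hμ0
          · exact hh
        have hx0 : (z' ∘ Sum.inl) ≠ 0 := by
          intro h
          apply hz'0
          funext j
          cases j with
          | inl j => exact congrFun h j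
          | inr j =>
            have h2 := congrFun h j
            simp only [Function.comp_apply, Pi.zero_apply] at h2
            simp [hvx j, h2]
        obtain ⟨j0, b, hb, hxk, _⟩ := heig _ (z' ∘ Sum.inl) hLxc hx0
        have hQi : Qc istar j0 ≠ 0 := by
          rw [hQcdef, Matrix.map_apply]
          intro hh
          have hcc : ((Q istar j0 : ℝ) : ℂ) = ((0:ℝ) : ℂ) := by
            rw [Complex.ofReal_zero]; exact hh
          exact hQrow j0 (Complex.ofReal_injective hcc)
        have h := hxk istar
        rw [show (z' ∘ Sum.inl) istar = z' (Sum.inl istar) from rfl, hxi] at h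
        exact absurd h.symm (mul_ne_zero hb hQi)
    -- conclude
    obtain ⟨b, hb⟩ := (hUmem zc).mp (hWU zc hobs)
    refine ⟨z (Sum.inl 0), ?_⟩
    have hb0 : ((z (Sum.inl 0) : ℝ) : ℂ) = b := congrFun hb (Sum.inl 0)
    funext j
    cases j with
    | inl j =>
      have h1 : ((z (Sum.inl j) : ℝ) : ℂ) = b := congrFun hb (Sum.inl j)
      rw [← hb0] at h1
      simpa using Complex.ofReal_injective h1
    | inr j =>
      have h1 : ((z (Sum.inr j) : ℝ) : ℂ) = 0 := congrFun hb (Sum.inr j)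
      simpa using Complex.ofReal_injective (by simpa using h1)
  · rintro ⟨a, rfl⟩ k _
    -- easy direction
    have hAe : A *ᵥ (Sum.elim (fun _ : Fin n => a) (fun _ : Fin n => (0:ℝ))) = 0 := by
      rw [hA, fromBlocks_mulVec]
      have h1 : (Sum.elim (fun _ : Fin n => a) (fun _ : Fin n => (0:ℝ))) ∘ Sum.inl
          = a • (fun _ : Fin n => (1:ℝ)) := by funext j; simp
      have h2 : (Sum.elim (fun _ : Fin n => a) (fun _ : Fin n => (0:ℝ))) ∘ Sum.inr = 0 := by
        funext j; simp
      rw [h1, h2]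
      simp [Matrix.neg_mulVec, Matrix.mulVec_smul, hL1]
    have hCkill : ∀ w : Fin n ⊕ Fin n → ℝ, (∀ j, w (Sum.inr j) = 0) → C *ᵥ w = 0 := by
      intro w hw
      funext i
      rw [rowC' c C hC w i, hw, mul_zero]
      rfl
    cases k with
    | zero =>
      rw [pow_zero, Matrix.mul_one]
      exact hCkill _ (fun j => rfl)
    | succ s =>
      rw [pow_succ, ← Matrix.mul_assoc, ← Matrix.mulVec_mulVec, hAe, Matrix.mulVec_zero]
end

section
/- Let L be an n×n real symmetric matrix with L·1ₙ = 0, and suppose there is an orthogonal matrix Q with QᵀLQ = diag(0, λ₂, …, λₙ) where λ₂, …, λₙ are distinct and strictly positive. Let M ⊆ {1, …, n} be nonempty, and suppose there exists i ∈ M such that every entry of the i-th row of Q is nonzero. Let C₁ be the |M|×n matrix whose rows are c_i·e_iᵀ for i ∈ M with c_i ≠ 0, let C be the |M|×2n matrix [C₁ | 0_{|M|×n}] (full observation of the monitored agents' positions), and let A be the 2n×2n block matrix [[0_{n×n}, I_n],[−L, −I_n]]. Then the kernel of the observability matrix obtained by stacking C, CA, CA², …, CA^{2n−1} is {0}; that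 is, the pair (A, C) is observable. -/
/-! In the eigenbasis of `L` the positions `x k = (A ^ k z)_x` split into modes `y l k` with
`y l (k + 2) + y l (k + 1) + λ l * y l k = 0`, and agent `i` observes `∑ l, Q i l * y l k`.
The operator `u ↦ u (· + 2) + u (· + 1) + λ m * u` multiplies the `l`-th mode by `λ m - λ l`;
applying it for all `m ≠ j` isolates the `j`-th mode with the factor `∏ m ≠ j, (λ m - λ j) ≠ 0`.
As `Q i j ≠ 0`, observations over `2n` steps force `y j 0 = y j 1 = 0`, so `x 0 = x 1 = 0`,
and `x 1` is the velocity part of `z`. -/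

open Matrix Finset

section Recurrence

variable {ι R : Type*} [Fintype ι] [CommRing R]

theorem sum_prod_sub_mul_eq_zero (lam : ι → R) (u : ι → ℕ → R)
    (hrec : ∀ l k, u l (k + 2) + u l (k + 1) + lam l * u l k = 0) {N : ℕ}
    (hsum : ∀ k < N, ∑ l, u l k = 0) (S : Finset ι) :
    ∀ k, k + 2 * #S < N → ∑ l, (∏ m ∈ S, (lam m - lam l)) * u l k = 0 := by
  classical
  induction S using Finset.induction_on with
  | empty => simpa using hsum
  | @insert m S hm ih =>
    intro k hk
    rw [card_insert_of_notMem hm] at hk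
    have hshift : ∀ l, (∏ m' ∈ insert m S, (lam m' - lam l)) * u l k
        = (∏ m' ∈ S, (lam m' - lam l)) * u l (k + 2)
          + (∏ m' ∈ S, (lam m' - lam l)) * u l (k + 1)
          + lam m * ((∏ m' ∈ S, (lam m' - lam l)) * u l k) := fun l => by
      rw [prod_insert hm]
      linear_combination -(∏ m' ∈ S, (lam m' - lam l)) * hrec l k
    simp only [hshift, sum_add_distrib, ← mul_sum]
    rw [ih k (by omega), ih (k + 1) (by omega), ih (k + 2) (by omega)]
    ring

theorem eq_zero_of_sum_eq_zero_of_injective [IsDomain R] [DecidableEq ι] {lam : ι → R}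
    (hlam : Function.Injective lam) (u : ι → ℕ → R)
    (hrec : ∀ l k, u l (k + 2) + u l (k + 1) + lam l * u l k = 0)
    (hsum : ∀ k < 2 * Fintype.card ι, ∑ l, u l k = 0) (j : ι) {k : ℕ} (hk : k < 2) :
    u j k = 0 := by
  have hcard : #(univ.erase j) + 1 = Fintype.card ι := card_erase_add_one (mem_univ j)
  have h := sum_prod_sub_mul_eq_zero lam u hrec hsum (univ.erase j) k (by omega)
  rw [sum_eq_single_of_mem j (mem_univ j) fun l _ hlj =>
    by rw [prod_eq_zero (mem_erase.mpr ⟨hlj, mem_univ l⟩) (sub_self _), zero_mul]] at h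
  refine (mul_eq_zero.mp h).resolve_left (prod_ne_zero_iff.mpr fun m hm => ?_)
  exact sub_ne_zero.mpr (hlam.ne (mem_erase.mp hm).1)

end Recurrence

section Consensus

variable {ι K : Type*} [Fintype ι] [DecidableEq ι] [CommRing K]

def consensusMatrix (L : Matrix ι ι K) : Matrix (ι ⊕ ι) (ι ⊕ ι) K :=
  fromBlocks 0 1 (-L) (-1)

variable (L : Matrix ι ι K) (w : ι ⊕ ι → K) (k : ℕ)

theorem consensusMatrix_mulVec :
    consensusMatrix L *ᵥ w = Sum.elim (w ∘ Sum.inr) (-(L *ᵥ (w ∘ Sum.inl)) - w ∘ Sum.inr) := by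
  rw [consensusMatrix, fromBlocks_mulVec]
  simp [sub_eq_add_neg, neg_mulVec]

theorem consensusMatrix_pow_mulVec_comp_inr :
    (consensusMatrix L ^ k *ᵥ w) ∘ Sum.inr = (consensusMatrix L ^ (k + 1) *ᵥ w) ∘ Sum.inl := by
  rw [pow_succ', ← mulVec_mulVec, consensusMatrix_mulVec, Sum.elim_comp_inl]

theorem consensusMatrix_pow_add_two_mulVec_comp_inl :
    (consensusMatrix L ^ (k + 2) *ᵥ w) ∘ Sum.inl
      = -(L *ᵥ ((consensusMatrix L ^ k *ᵥ w) ∘ Sum.inl))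
        - (consensusMatrix L ^ (k + 1) *ᵥ w) ∘ Sum.inl := by
  rw [← consensusMatrix_pow_mulVec_comp_inr, ← consensusMatrix_pow_mulVec_comp_inr, pow_succ',
    ← mulVec_mulVec, consensusMatrix_mulVec, Sum.elim_comp_inr]

end Consensus

theorem eq_zero_of_coord_eq_zero_of_diagonal {ι K : Type*} [Fintype ι] [DecidableEq ι] [Field K]
    {L Q : Matrix ι ι K} (hQ : Qᵀ * Q = 1) {lam : ι → K} (hlam : Function.Injective lam)
    (hdiag : Qᵀ * L * Q = diagonal lam) {i : ι} (hi : ∀ j, Q i j ≠ 0) (p : ℕ → ι → K)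
    (hp : ∀ k, p (k + 2) = -(L *ᵥ p k) - p (k + 1))
    (hobs : ∀ k < 2 * Fintype.card ι, p k i = 0) {k : ℕ} (hk : k < 2) :
    p k = 0 := by
  have hQQ : Q * Qᵀ = 1 := mul_eq_one_comm.mpr hQ
  have hQL : Qᵀ * L = diagonal lam * Qᵀ := by
    rw [← hdiag, Matrix.mul_assoc _ Q, hQQ, Matrix.mul_one]
  have hmode : ∀ l k, (Qᵀ *ᵥ p (k + 2)) l + (Qᵀ *ᵥ p (k + 1)) l + lam l * (Qᵀ *ᵥ p k) l = 0 := by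
    intro l k
    rw [hp, mulVec_sub, mulVec_neg, mulVec_mulVec, hQL, ← mulVec_mulVec]
    simp only [Pi.sub_apply, Pi.neg_apply, mulVec_diagonal]
    ring
  have hsum : ∀ k < 2 * Fintype.card ι, ∑ l, Q i l * (Qᵀ *ᵥ p k) l = 0 := fun k hk =>
    (congrFun (by rw [mulVec_mulVec, hQQ, one_mulVec] : Q *ᵥ (Qᵀ *ᵥ p k) = p k) i).trans
      (hobs k hk)
  have hzero : Qᵀ *ᵥ p k = 0 := funext fun j =>
    (mul_eq_zero.mp (eq_zero_of_sum_eq_zero_of_injective hlam _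
      (fun l k => by linear_combination Q i l * hmode l k) hsum j hk)).resolve_left (hi j)
  rw [← one_mulVec (p k), ← hQQ, ← mulVec_mulVec, hzero, mulVec_zero]

theorem stmt_7_general {n : ℕ} [NeZero n]
    (L Q : Matrix (Fin n) (Fin n) ℝ)
    (hQ : Qᵀ * Q = 1)
    (lam : Fin n → ℝ) (hlam0 : lam 0 = 0)
    (hlampos : ∀ i : Fin n, i ≠ 0 → 0 < lam i)
    (hlamdist : ∀ i j : Fin n, i ≠ 0 → j ≠ 0 → i ≠ j → lam i ≠ lam j)
    (hdiag : Qᵀ * L * Q = Matrix.diagonal lam)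
    (M : Finset (Fin n))
    (hdef : ∃ i ∈ M, ∀ j, Q i j ≠ 0)
    (c : Fin n → ℝ) (hc : ∀ i ∈ M, c i ≠ 0)
    (C : Matrix {i // i ∈ M} (Fin n ⊕ Fin n) ℝ)
    (hC : ∀ (i : {i // i ∈ M}) (j : Fin n ⊕ Fin n),
      C i j = Sum.elim (fun k : Fin n => if k = (i : Fin n) then c (i : Fin n) else 0)
        (fun _ : Fin n => (0:ℝ)) j)
    (A : Matrix (Fin n ⊕ Fin n) (Fin n ⊕ Fin n) ℝ)
    (hA : A = Matrix.fromBlocks 0 1 (-L) (-1)) :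
    {z : Fin n ⊕ Fin n → ℝ | ∀ k : ℕ, k < 2 * n → (C * A ^ k).mulVec z = 0}
      = {(0 : Fin n ⊕ Fin n → ℝ)} := by
  obtain ⟨i, hiM, hiQ⟩ := hdef
  have hlam : Function.Injective lam := fun a b hab => by
    by_contra hne
    rcases eq_or_ne a 0 with rfl | ha <;> rcases eq_or_ne b 0 with rfl | hb
    · exact hne rfl
    · exact (hlampos b hb).ne (hlam0.symm.trans hab)
    · exact (hlampos a ha).ne' (hab.trans hlam0)
    · exact hlamdist a b ha hb hne hab
  have hrow : ∀ w : Fin n ⊕ Fin n → ℝ, (C *ᵥ w) ⟨i, hiM⟩ = c i * w (Sum.inl i) := fun w => by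
    simp [mulVec, dotProduct, hC, Fintype.sum_sum_type]
  subst hA
  ext z
  refine ⟨fun hz => ?_, by rintro rfl k _; exact mulVec_zero _⟩
  set p : ℕ → Fin n → ℝ := fun k => (consensusMatrix L ^ k *ᵥ z) ∘ Sum.inl with hp
  have hobs : ∀ k < 2 * Fintype.card (Fin n), p k i = 0 := fun k hk => by
    have h := congrFun (hz k (by simpa using hk)) ⟨i, hiM⟩
    rw [← mulVec_mulVec, hrow] at h
    exact (mul_eq_zero.mp h).resolve_left (hc i hiM)
  have hp_zero : ∀ k < 2, p k = 0 := fun k hk =>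
    eq_zero_of_coord_eq_zero_of_diagonal hQ hlam hdiag hiQ p
      (consensusMatrix_pow_add_two_mulVec_comp_inl L z) hobs hk
  have hpos : z ∘ Sum.inl = p 0 := by simp [hp]
  have hvel : z ∘ Sum.inr = p 1 := by simpa [hp] using consensusMatrix_pow_mulVec_comp_inr L z 0
  rw [Set.mem_singleton_iff, ← Sum.elim_comp_inl_inr z, hpos, hvel, hp_zero 0 (by norm_num),
    hp_zero 1 (by norm_num), Sum.elim_zero_zero]

/-- Theorem 1, second bullet (eq. (40)): under full position observation of the monitored
agents, the kernel of the stacked observability matrix of `A = [[0, I], [-L, -I]]` is `{0}`,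
i.e. the pair `(A, C)` is observable. -/
theorem stmt_7 {n : ℕ} [NeZero n]
    (L Q : Matrix (Fin n) (Fin n) ℝ) (hLsymm : L.IsSymm)
    (hL1 : L.mulVec (fun _ => (1:ℝ)) = 0)
    (hQ : Qᵀ * Q = 1)
    (lam : Fin n → ℝ) (hlam0 : lam 0 = 0)
    (hlampos : ∀ i : Fin n, i ≠ 0 → 0 < lam i)
    (hlamdist : ∀ i j : Fin n, i ≠ 0 → j ≠ 0 → i ≠ j → lam i ≠ lam j)
    (hdiag : Qᵀ * L * Q = Matrix.diagonal lam)
    (M : Finset (Fin n)) (hM : M.Nonempty)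
    (hdef : ∃ i ∈ M, ∀ j, Q i j ≠ 0)
    (c : Fin n → ℝ) (hc : ∀ i ∈ M, c i ≠ 0)
    (C : Matrix {i // i ∈ M} (Fin n ⊕ Fin n) ℝ)
    (hC : ∀ (i : {i // i ∈ M}) (j : Fin n ⊕ Fin n),
      C i j = Sum.elim (fun k : Fin n => if k = (i : Fin n) then c (i : Fin n) else 0)
        (fun _ : Fin n => (0:ℝ)) j)
    (A : Matrix (Fin n ⊕ Fin n) (Fin n ⊕ Fin n) ℝ)
    (hA : A = Matrix.fromBlocks 0 1 (-L) (-1)) :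
    {z : Fin n ⊕ Fin n → ℝ | ∀ k : ℕ, k < 2 * n → (C * A ^ k).mulVec z = 0}
      = {(0 : Fin n ⊕ Fin n → ℝ)} :=
  stmt_7_general L Q hQ lam hlam0 hlampos hlamdist hdiag M hdef c hc C hC A hA
end

section
/- Let L be an n×n real symmetric matrix with L·1ₙ = 0, and suppose there is an orthogonal matrix Q with QᵀLQ = diag(0, λ₂, …, λₙ) where λ₂, …, λₙ are distinct and strictly positive. Let M ⊆ {1, …, n} be nonempty, and suppose there exists i ∈ M such that every entry of the i-th row of Q is nonzero. Let C₁ = C₂ be the |M|×n matrix whose rows are c_i·e_iᵀ for i ∈ M with c_i ≠ 0, let C be the |M|×2n matrix [C₁ | C₂] (partial observation with equal position and velocity coefficients), and let A be the 2n×2n block matrix [[0_{n×n}, I_n],[−L, −I_n]]. Then the kernel of the observability matrix obtained by stacking C, CA, CA², …, CA^{2n−1} equals span{(1ₙ, −1ₙ)}, the line spanned by the vector whose first n coordinates are all ones and last n coordinates are all minus ones. -/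
open Polynomial
noncomputable section

def obsShift : Module.End ℝ (ℕ → ℝ) where
  toFun σ := fun k => σ (k+1)
  map_add' := by intros; rfl
  map_smul' := by intros; rfl

lemma obsShift_pow (i : ℕ) (σ : ℕ → ℝ) (k : ℕ) : ((obsShift ^ i) σ) k = σ (k + i) := by
  induction i generalizing σ k with
  | zero => rfl
  | succ m ih =>
    rw [pow_succ]
    show ((obsShift ^ m) (obsShift σ)) k = _
    rw [ih]
    rfl

lemma obsAct_apply (p : ℝ[X]) (σ : ℕ → ℝ) (k : ℕ) :
    (Polynomial.aeval obsShift p σ) k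
      = ∑ l ∈ Finset.range (p.natDegree + 1), p.coeff l * σ (k + l) := by
  rw [Polynomial.aeval_eq_sum_range]
  simp [Finset.sum_apply, obsShift_pow]

lemma obsAct_vanish (P : ℝ[X]) (hP : P.Monic) (σ : ℕ → ℝ)
    (hσ : Polynomial.aeval obsShift P σ = 0)
    (h0 : ∀ k < P.natDegree, σ k = 0) : σ = 0 := by
  by_cases hd : P.natDegree = 0
  · have hP1 : P = 1 := hP.natDegree_eq_zero.mp hd
    rw [hP1, map_one] at hσ
    exact hσ
  · funext k
    induction k using Nat.strong_induction_on with
    | _ k ih =>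
      show σ k = 0
      by_cases hk : k < P.natDegree
      · exact h0 k hk
      · push_neg at hk
        have hval := congrFun hσ (k - P.natDegree)
        rw [obsAct_apply] at hval
        rw [Finset.sum_range_succ] at hval
        have hsum : ∑ l ∈ Finset.range P.natDegree,
            P.coeff l * σ (k - P.natDegree + l) = 0 := by
          refine Finset.sum_eq_zero fun l hl => ?_
          rw [Finset.mem_range] at hl
          have : σ (k - P.natDegree + l) = 0 := ih _ (by omega)
          rw [this, mul_zero]
        rw [hsum, hP.coeff_natDegree, Nat.sub_add_cancel hk] at hval
        simpa using hval

lemma obsCoprime {a b : ℝ} (hab : a ≠ b) :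
    IsCoprime (X^2 + X + C a : ℝ[X]) (X^2 + X + C b) := by
  have h : (a - b) ≠ 0 := sub_ne_zero.mpr hab
  refine ⟨C (a - b)⁻¹, -C (a - b)⁻¹, ?_⟩
  have key : C (a-b)⁻¹ * (X^2+X+C a : ℝ[X]) + (-C (a-b)⁻¹) * (X^2+X+C b)
      = C (a-b)⁻¹ * C (a - b) := by
    rw [map_sub]; ring
  rw [key, ← map_mul, inv_mul_cancel₀ h, map_one]

lemma obsMonic (a : ℝ) : (X^2 + X + C a : ℝ[X]).Monic := by
  have h : (X^2 + X + C a : ℝ[X]) = X^(1+1) + (X + C a) := by ring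
  rw [h]
  apply Polynomial.monic_X_pow_add
  rw [Polynomial.degree_X_add_C]
  norm_num

lemma obsDeg (a : ℝ) : (X^2 + X + C a : ℝ[X]).natDegree = 2 := by
  have h : (X^2 + X + C a : ℝ[X]) = X^2 + (X + C a) := by ring
  have h1 : ((X:ℝ[X]) + C a).degree < ((X:ℝ[X])^2).degree := by
    rw [Polynomial.degree_X_pow, Polynomial.degree_X_add_C]
    norm_num
  have hdeg : (X^2 + X + C a : ℝ[X]).degree = 2 := by
    rw [h, Polynomial.degree_add_eq_left_of_degree_lt h1, Polynomial.degree_X_pow]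
    norm_num
  exact Polynomial.natDegree_eq_of_degree_eq_some hdeg

lemma obsKey {N : ℕ} (lam : Fin N → ℝ) (hdist : ∀ a b : Fin N, a ≠ b → lam a ≠ lam b)
    (w : Fin N → ℝ) (hw : ∀ j, w j ≠ 0)
    (σ : Fin N → ℕ → ℝ)
    (hrec : ∀ j k, σ j (k+2) = -σ j (k+1) - lam j * σ j k)
    (hvan : ∀ k < 2 * N, (∑ j, w j * σ j k) = 0) :
    ∀ j k, σ j k = 0 := by
  set p : Fin N → ℝ[X] := fun j => X^2 + X + C (lam j) with hp
  have hann : ∀ j, Polynomial.aeval obsShift (p j) (σ j) = 0 := by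
    intro j
    funext k
    have : (Polynomial.aeval obsShift (p j)) (σ j)
        = (obsShift ^ 2) (σ j) + obsShift (σ j) + lam j • σ j := by
      simp [hp, map_add, map_pow]
    rw [this]
    have h2 := obsShift_pow 2 (σ j) k
    simp only [Pi.add_apply, Pi.smul_apply, smul_eq_mul, Pi.zero_apply]
    rw [h2]
    show σ j (k + 2) + σ j (k + 1) + lam j * σ j k = 0
    rw [hrec j k]; ring
  have hdvd_ann : ∀ (q : ℝ[X]) (j : Fin N), p j ∣ q →
      Polynomial.aeval obsShift q (σ j) = 0 := by
    rintro q j ⟨r, rfl⟩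
    rw [mul_comm, map_mul, Module.End.mul_apply, hann, map_zero]
  set P : ℝ[X] := ∏ j, p j with hPdef
  have hPmonic : P.Monic := Polynomial.monic_prod_of_monic _ _ fun j _ => obsMonic (lam j)
  have hPdeg : P.natDegree = 2 * N := by
    rw [hPdef, Polynomial.natDegree_prod _ _ (fun j _ => (obsMonic (lam j)).ne_zero)]
    have hco : ∀ j ∈ Finset.univ, (p j).natDegree = 2 := fun j _ => obsDeg (lam j)
    rw [Finset.sum_congr rfl hco, Finset.sum_const, Finset.card_univ, Fintype.card_fin,
      smul_eq_mul, mul_comm]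
  set f : ℕ → ℝ := fun k => ∑ j, w j * σ j k with hfdef
  have hf : f = ∑ j, w j • σ j := by
    funext k; simp [hfdef, Finset.sum_apply]
  have hPf : Polynomial.aeval obsShift P f = 0 := by
    rw [hf, map_sum]
    refine Finset.sum_eq_zero fun j _ => ?_
    rw [map_smul, hdvd_ann P j (Finset.dvd_prod_of_mem _ (Finset.mem_univ j)), smul_zero]
  have hfz : f = 0 := by
    refine obsAct_vanish P hPmonic f hPf fun k hk => ?_
    exact hvan k (by omega)
  intro j
  set Pj : ℝ[X] := ∏ j' ∈ Finset.univ.erase j, p j' with hPjdef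
  have hPjσ : Polynomial.aeval obsShift Pj (σ j) = 0 := by
    have h1 : Polynomial.aeval obsShift Pj f = 0 := by rw [hfz, map_zero]
    rw [hf, map_sum] at h1
    have h2 : ∀ j' ∈ Finset.univ, j' ≠ j →
        (Polynomial.aeval obsShift Pj) (w j' • σ j') = 0 := by
      intro j' _ hj'
      rw [map_smul, hdvd_ann Pj j'
        (Finset.dvd_prod_of_mem _ (Finset.mem_erase.mpr ⟨hj', Finset.mem_univ j'⟩)), smul_zero]
    rw [Finset.sum_eq_single j h2 (fun h => absurd (Finset.mem_univ j) h)] at h1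
    rw [map_smul] at h1
    have := smul_eq_zero.mp h1
    tauto
  have hcop : IsCoprime (p j) Pj := by
    refine IsCoprime.prod_right fun j' hj' => ?_
    have hne : j' ≠ j := (Finset.mem_erase.mp hj').1
    exact obsCoprime (hdist j j' hne.symm)
  obtain ⟨u, v, huv⟩ := hcop
  have hσ0 : σ j = 0 := by
    have h3 := congrArg (fun q => Polynomial.aeval obsShift q (σ j)) huv
    simpa [map_add, map_mul, Module.End.mul_apply, hann j, hPjσ, map_zero, map_one,
      Module.End.one_apply] using h3.symm
  intro k
  rw [hσ0]
  rfl

open Matrix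

/-- Theorem 1, third bullet (eq. (41)): under partial observation with equal position and
velocity coefficients, the kernel of the stacked observability matrix of
`A = [[0, I], [-L, -I]]` equals `span{(1ₙ, −1ₙ)}`. -/
theorem stmt_8 {n : ℕ} [NeZero n]
    (L Q : Matrix (Fin n) (Fin n) ℝ) (hLsymm : L.IsSymm)
    (hL1 : L.mulVec (fun _ => (1:ℝ)) = 0)
    (hQ : Qᵀ * Q = 1)
    (lam : Fin n → ℝ) (hlam0 : lam 0 = 0)
    (hlampos : ∀ i : Fin n, i ≠ 0 → 0 < lam i)
    (hlamdist : ∀ i j : Fin n, i ≠ 0 → j ≠ 0 → i ≠ j → lam i ≠ lam j)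
    (hdiag : Qᵀ * L * Q = Matrix.diagonal lam)
    (M : Finset (Fin n)) (hM : M.Nonempty)
    (hdef : ∃ i ∈ M, ∀ j, Q i j ≠ 0)
    (c : Fin n → ℝ) (hc : ∀ i ∈ M, c i ≠ 0)
    (C : Matrix {i // i ∈ M} (Fin n ⊕ Fin n) ℝ)
    (hC : ∀ (i : {i // i ∈ M}) (j : Fin n ⊕ Fin n),
      C i j = Sum.elim (fun k : Fin n => if k = (i : Fin n) then c (i : Fin n) else 0)
        (fun k : Fin n => if k = (i : Fin n) then c (i : Fin n) else 0) j)
    (A : Matrix (Fin n ⊕ Fin n) (Fin n ⊕ Fin n) ℝ)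
    (hA : A = Matrix.fromBlocks 0 1 (-L) (-1)) :
    {z : Fin n ⊕ Fin n → ℝ | ∀ k : ℕ, k < 2 * n → (C * A ^ k).mulVec z = 0}
      = {z : Fin n ⊕ Fin n → ℝ |
          ∃ a : ℝ, z = Sum.elim (fun _ : Fin n => a) (fun _ : Fin n => -a)} := by
  obtain ⟨i0, hi0M, hQi0⟩ := hdef
  have hQQT : Q * Qᵀ = 1 := mul_eq_one_comm.mp hQ
  have hQTinj : ∀ u : Fin n → ℝ, Q.mulVec (Qᵀ.mulVec u) = u := by
    intro u; rw [Matrix.mulVec_mulVec, hQQT, Matrix.one_mulVec]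
  have hQTL : Qᵀ * L = Matrix.diagonal lam * Qᵀ := by
    have h := congrArg (fun X => X * Qᵀ) hdiag
    simpa [Matrix.mul_assoc, hQQT, Matrix.mul_one] using h
  have hdist : ∀ a b : Fin n, a ≠ b → lam a ≠ lam b := by
    intro a b hab
    by_cases ha : a = 0
    · subst ha
      by_cases hb : b = 0
      · exact absurd hb.symm hab
      · rw [hlam0]; exact (hlampos b hb).ne
    · by_cases hb : b = 0
      · subst hb; rw [hlam0]; exact (hlampos a ha).ne'
      · exact hlamdist a b ha hb hab
  have hCrow : ∀ (w : Fin n ⊕ Fin n → ℝ) (i : {i // i ∈ M}),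
      C.mulVec w i = c i * (w (Sum.inl i) + w (Sum.inr i)) := by
    intro w i
    simp only [Matrix.mulVec, dotProduct, hC, Fintype.sum_sum_type, Sum.elim_inl,
      Sum.elim_inr, ite_mul, zero_mul]
    rw [Finset.sum_ite_eq' Finset.univ (i : Fin n), Finset.sum_ite_eq' Finset.univ (i : Fin n)]
    simp [mul_add]
  have hAmul : ∀ w : Fin n ⊕ Fin n → ℝ, A.mulVec w =
      Sum.elim (w ∘ Sum.inr) (-(L.mulVec (w ∘ Sum.inl)) - w ∘ Sum.inr) := by
    intro w
    rw [hA, Matrix.fromBlocks_mulVec]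
    simp [Matrix.neg_mulVec, Matrix.zero_mulVec, Matrix.one_mulVec, sub_eq_add_neg]
  have hAl : ∀ (w : Fin n ⊕ Fin n → ℝ) m, A.mulVec w (Sum.inl m) = w (Sum.inr m) := by
    intro w m; rw [hAmul]; rfl
  have hAr : ∀ (w : Fin n ⊕ Fin n → ℝ) m, A.mulVec w (Sum.inr m)
      = -(L.mulVec (fun j => w (Sum.inl j))) m - w (Sum.inr m) := by
    intro w m; rw [hAmul]; rfl
  ext z
  simp only [Set.mem_setOf_eq]
  constructor
  · intro hz
    set zk : ℕ → (Fin n ⊕ Fin n → ℝ) := fun k => (A ^ k).mulVec z with hzk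
    have hzk0 : zk 0 = z := by simp [hzk]
    have hzkS : ∀ k, zk (k+1) = A.mulVec (zk k) := by
      intro k
      show (A ^ (k+1)).mulVec z = _
      rw [pow_succ']
      exact (Matrix.mulVec_mulVec z A (A^k)).symm
    set g : ℕ → Fin n → ℝ := fun k m => zk k (Sum.inl m) + zk k (Sum.inr m) with hg
    set xk : ℕ → Fin n → ℝ := fun k m => zk k (Sum.inl m) with hxk
    have hg1 : ∀ k, g (k+1) = -(L.mulVec (xk k)) := by
      intro k; funext m
      show zk (k+1) (Sum.inl m) + zk (k+1) (Sum.inr m) = _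
      rw [hzkS k, hAl, hAr]
      show zk k (Sum.inr m) + (-(L.mulVec (xk k)) m - zk k (Sum.inr m))
        = (-(L.mulVec (xk k))) m
      simp
    have hxS : ∀ k, xk (k+1) = g k - xk k := by
      intro k; funext m
      show zk (k+1) (Sum.inl m) = _
      rw [hzkS k, hAl]
      show zk k (Sum.inr m) = (zk k (Sum.inl m) + zk k (Sum.inr m)) - zk k (Sum.inl m)
      ring
    have hgrec : ∀ k, g (k+2) = -g (k+1) - L.mulVec (g k) := by
      intro k
      show g ((k+1)+1) = _
      rw [hg1 (k+1), hxS k, Matrix.mulVec_sub, hg1 k]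
      abel
    set hh : ℕ → Fin n → ℝ := fun k => Qᵀ.mulVec (g k) with hhdef
    have hgQ : ∀ k, g k = Q.mulVec (hh k) := fun k => (hQTinj (g k)).symm
    have hhrec : ∀ (j : Fin n) k, hh (k+2) j = -hh (k+1) j - lam j * hh k j := by
      intro j k
      have h2 : Qᵀ.mulVec (L.mulVec (g k)) = (Matrix.diagonal lam).mulVec (hh k) := by
        rw [Matrix.mulVec_mulVec, hQTL, ← Matrix.mulVec_mulVec]
      show Qᵀ.mulVec (g (k+2)) j = _
      rw [hgrec k, Matrix.mulVec_sub, Matrix.mulVec_neg, h2]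
      simp [Matrix.mulVec_diagonal]
      rfl
    have hvan : ∀ k < 2 * n, (∑ j, Q i0 j * hh k j) = 0 := by
      intro k hk
      have h1 := congrFun (hz k hk) ⟨i0, hi0M⟩
      rw [← Matrix.mulVec_mulVec, hCrow] at h1
      have h2 : g k i0 = 0 := by
        have h3 : c i0 * g k i0 = 0 := by simpa using h1
        exact (mul_eq_zero.mp h3).resolve_left (hc i0 hi0M)
      calc ∑ j, Q i0 j * hh k j = Q.mulVec (hh k) i0 := rfl
        _ = g k i0 := by rw [← hgQ]
        _ = 0 := h2
    have hh0 : ∀ (j : Fin n) k, hh k j = 0 :=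
      obsKey lam hdist (fun j => Q i0 j) hQi0 (fun j k => hh k j) (fun j k => hhrec j k) hvan
    have hgz : ∀ k, g k = 0 := by
      intro k
      rw [hgQ k]
      have hz0 : hh k = 0 := funext fun j => hh0 j k
      rw [hz0, Matrix.mulVec_zero]
    have hsum0 : ∀ m, z (Sum.inl m) + z (Sum.inr m) = 0 := by
      intro m
      have h4 := congrFun (hgz 0) m
      rw [hg] at h4
      simpa [hzk0] using h4
    have hxk0 : xk 0 = fun m => z (Sum.inl m) := by
      funext m
      show zk 0 (Sum.inl m) = _
      rw [hzk0]
    have hLx : L.mulVec (xk 0) = 0 := by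
      have h1 := hgz 1
      rw [show (1:ℕ) = 0 + 1 from rfl, hg1 0] at h1
      exact neg_eq_zero.mp h1
    have hkery : ∀ (w : Fin n → ℝ), L.mulVec w = 0 → ∀ j, j ≠ 0 → Qᵀ.mulVec w j = 0 := by
      intro w hw j hj
      have h1 : (Matrix.diagonal lam).mulVec (Qᵀ.mulVec w) = 0 := by
        rw [Matrix.mulVec_mulVec, ← hQTL, ← Matrix.mulVec_mulVec, hw, Matrix.mulVec_zero]
      have h2 := congrFun h1 j
      rw [Matrix.mulVec_diagonal] at h2
      exact (mul_eq_zero.mp h2).resolve_left (hlampos j hj).ne'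
    have hyj := hkery (xk 0) hLx
    have huj := hkery (fun _ => (1:ℝ)) hL1
    set y : Fin n → ℝ := Qᵀ.mulVec (xk 0) with hy
    set u1 : Fin n → ℝ := Qᵀ.mulVec (fun _ => (1:ℝ)) with hu1
    have hu0 : u1 0 ≠ 0 := by
      intro h0
      have hu1z : u1 = 0 := by
        funext j
        by_cases hj : j = 0
        · rw [hj]; exact h0
        · exact huj j hj
      have h5 := hQTinj (fun _ => (1:ℝ))
      rw [← hu1, hu1z, Matrix.mulVec_zero] at h5
      simpa using congrFun h5 0
    set a : ℝ := y 0 / u1 0 with ha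
    have hya : y = a • u1 := by
      funext j
      by_cases hj : j = 0
      · rw [hj]
        show y 0 = a * u1 0
        rw [ha, div_mul_cancel₀ _ hu0]
      · simp [hyj j hj, huj j hj]
    have hx0a : xk 0 = fun _ => a := by
      have h1 : Q.mulVec y = xk 0 := hQTinj (xk 0)
      rw [hya, Matrix.mulVec_smul] at h1
      have h2 : Q.mulVec u1 = fun _ : Fin n => (1:ℝ) := hQTinj _
      rw [h2] at h1
      funext m
      rw [← h1]
      simp
    have hza : (fun m => z (Sum.inl m)) = fun _ : Fin n => a := hxk0 ▸ hx0a
    refine ⟨a, ?_⟩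
    funext j
    cases j with
    | inl m =>
      show z (Sum.inl m) = a
      exact congrFun hza m
    | inr m =>
      show z (Sum.inr m) = -a
      have hxm : z (Sum.inl m) = a := congrFun hza m
      have hs := hsum0 m
      linarith
  · rintro ⟨a, rfl⟩
    intro k hk
    have hone : L.mulVec (fun _ : Fin n => a) = 0 := by
      have h : (fun _ : Fin n => a) = a • (fun _ : Fin n => (1:ℝ)) := by funext m; simp
      rw [h, Matrix.mulVec_smul, hL1, smul_zero]
    have hAz : A.mulVec (Sum.elim (fun _ : Fin n => a) (fun _ : Fin n => -a))
        = (-1 : ℝ) • (Sum.elim (fun _ : Fin n => a) (fun _ : Fin n => -a)) := by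
      rw [hAmul]
      funext j
      cases j with
      | inl m => simp
      | inr m =>
        show -(L.mulVec ((Sum.elim (fun _ : Fin n => a) (fun _ : Fin n => -a)) ∘ Sum.inl)) m
          - ((Sum.elim (fun _ : Fin n => a) (fun _ : Fin n => -a)) ∘ Sum.inr) m = _
        have h : (Sum.elim (fun _ : Fin n => a) (fun _ : Fin n => -a)) ∘ Sum.inl
            = fun _ : Fin n => a := rfl
        rw [h, hone]
        simp
    have hpow : ∀ k, (A ^ k).mulVec (Sum.elim (fun _ : Fin n => a) (fun _ : Fin n => -a))
        = ((-1:ℝ)^k) • (Sum.elim (fun _ : Fin n => a) (fun _ : Fin n => -a)) := by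
      intro k
      induction k with
      | zero => simp [Matrix.one_mulVec]
      | succ m ih =>
        rw [pow_succ, ← Matrix.mulVec_mulVec, hAz, Matrix.mulVec_smul, ih, smul_smul, pow_succ]
        ring_nf
    have hCz : C.mulVec (Sum.elim (fun _ : Fin n => a) (fun _ : Fin n => -a)) = 0 := by
      funext i
      rw [hCrow]
      simp
    rw [← Matrix.mulVec_mulVec, hpow, Matrix.mulVec_smul, hCz, smul_zero]
end
end

section
/- Let L be an n×n real symmetric matrix with L·1ₙ = 0, and suppose there is an orthogonal matrix Q with QᵀLQ = diag(0, λ₂, …, λₙ) where λ₂, …, λₙ are distinct and strictly positive. Let i ∈ {1, …, n} be such that every entry of the i-th row of Q is nonzero. If x ∈ ℝⁿ satisfies e_iᵀ·L^d·x = 0 for every integer d ≥ 2, then x ∈ span{1ₙ}, i.e., all coordinates of x are equal. -/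
/-!
With `y = Qᵀ x`, the hypothesis reads `∑ⱼ Qᵢⱼ yⱼ λⱼ ^ d = 0` for all `d ≥ 2`. The `λⱼ` are pairwise
distinct (including `λ₀ = 0`), so the transposed Vandermonde system forces `Qᵢⱼ yⱼ λⱼ ² = 0`, hence
`yⱼ = 0` for `j ≠ 0` and `x = Q y` is a multiple of the zeroth column of `Q`. That column is
constant: `L 1 = 0` makes `Qᵀ 1` vanish off the zero eigenvalue, so `1` is itself a multiple of it.
-/

open Matrix

namespace Matrix

theorem forall_mul_pow_eq_zero_of_forall_sum_mul_pow_eq_zero {R : Type*} [CommRing R]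
    [IsDomain R] {n m : ℕ} {f v : Fin n → R} (hf : Function.Injective f)
    (hfv : ∀ d, m ≤ d → ∑ j, v j * f j ^ d = 0) (j : Fin n) : v j * f j ^ m = 0 := by
  have h := eq_zero_of_forall_pow_sum_mul_pow_eq_zero (v := fun j ↦ v j * f j ^ m) hf
    fun d ↦ by simpa [mul_assoc, ← pow_add, add_comm] using hfv (d + m) (Nat.le_add_left m d)
  exact congrFun h j

variable {ι R : Type*} [Fintype ι] [DecidableEq ι]

section CommRing

variable [CommRing R] {L Q : Matrix ι ι R} {lam : ι → R}

theorem eq_mul_diagonal_mul_transpose (hQ : Qᵀ * Q = 1) (hdiag : Qᵀ * L * Q = diagonal lam) :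
    L = Q * diagonal lam * Qᵀ := by
  have hQQ : Q * Qᵀ = 1 := mul_eq_one_comm.mp hQ
  calc L = (Q * Qᵀ) * L * (Q * Qᵀ) := by rw [hQQ, one_mul, mul_one]
    _ = Q * (Qᵀ * L * Q) * Qᵀ := by simp only [Matrix.mul_assoc]
    _ = Q * diagonal lam * Qᵀ := by rw [hdiag]

theorem pow_eq_mul_diagonal_pow_mul_transpose (hQ : Qᵀ * Q = 1)
    (hdiag : Qᵀ * L * Q = diagonal lam) (d : ℕ) :
    L ^ d = Q * diagonal (lam ^ d) * Qᵀ := by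
  rw [eq_mul_diagonal_mul_transpose hQ hdiag, ← diagonal_pow]
  exact Units.conj_pow ⟨Q, Qᵀ, mul_eq_one_comm.mp hQ, hQ⟩ _ d

theorem pow_mulVec_apply_eq_sum (hQ : Qᵀ * Q = 1) (hdiag : Qᵀ * L * Q = diagonal lam)
    (d : ℕ) (x : ι → R) (i : ι) :
    (L ^ d *ᵥ x) i = ∑ j, Q i j * (Qᵀ *ᵥ x) j * lam j ^ d := by
  rw [pow_eq_mul_diagonal_pow_mul_transpose hQ hdiag, ← mulVec_mulVec, ← mulVec_mulVec]
  generalize Qᵀ *ᵥ x = y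
  simp only [mulVec, dotProduct, diagonal_apply, ite_mul, zero_mul, Finset.sum_ite_eq,
    Finset.mem_univ, if_true, Pi.pow_apply]
  exact Finset.sum_congr rfl fun j _ ↦ by ring

theorem eq_col_mul_of_transpose_mulVec_apply_eq_zero (hQ : Qᵀ * Q = 1) {x : ι → R} {j₀ : ι}
    (hx : ∀ j, j ≠ j₀ → (Qᵀ *ᵥ x) j = 0) :
    x = fun k ↦ Q k j₀ * (Qᵀ *ᵥ x) j₀ := by
  have hsingle : Qᵀ *ᵥ x = Pi.single j₀ ((Qᵀ *ᵥ x) j₀) := by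
    ext j
    rcases eq_or_ne j j₀ with rfl | hj
    · simp
    · simp [hx j hj, hj]
  calc x = Q *ᵥ (Qᵀ *ᵥ x) := by rw [mulVec_mulVec, mul_eq_one_comm.mp hQ, one_mulVec]
    _ = _ := by rw [hsingle]; ext k; simp

end CommRing

theorem exists_col_eq_const_of_mulVec_one_eq_zero {K : Type*} [Field K] {L Q : Matrix ι ι K}
    {lam : ι → K} (hQ : Qᵀ * Q = 1) (hdiag : Qᵀ * L * Q = diagonal lam)
    (hL1 : L *ᵥ (fun _ ↦ 1) = 0) {j₀ : ι} (hlam : ∀ j, j ≠ j₀ → lam j ≠ 0) :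
    ∃ a, ∀ k, Q k j₀ = a := by
  have hQQ : Q * Qᵀ = 1 := mul_eq_one_comm.mp hQ
  have hker : ∀ j, j ≠ j₀ → (Qᵀ *ᵥ fun _ ↦ 1) j = 0 := by
    intro j hj
    have h : diagonal lam *ᵥ (Qᵀ *ᵥ fun _ ↦ 1) = Qᵀ *ᵥ (L *ᵥ fun _ ↦ 1) := by
      rw [← hdiag, mulVec_mulVec, mulVec_mulVec, Matrix.mul_assoc (Qᵀ * L), hQQ, Matrix.mul_one]
    have := congrFun h j
    rw [hL1, mulVec_zero, mulVec_diagonal] at this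
    exact (mul_eq_zero.mp this).resolve_left (hlam j hj)
  refine ⟨((Qᵀ *ᵥ fun _ ↦ 1) j₀)⁻¹, fun k ↦ eq_inv_of_mul_eq_one_left ?_⟩
  exact (congrFun (eq_col_mul_of_transpose_mulVec_apply_eq_zero hQ hker) k).symm

end Matrix

theorem stmt_9_general {n : ℕ} [NeZero n]
    (L Q : Matrix (Fin n) (Fin n) ℝ)
    (hL1 : L.mulVec (fun _ => (1:ℝ)) = 0)
    (hQ : Qᵀ * Q = 1)
    (lam : Fin n → ℝ) (hlam0 : lam 0 = 0)
    (hlampos : ∀ i : Fin n, i ≠ 0 → 0 < lam i)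
    (hlamdist : ∀ i j : Fin n, i ≠ 0 → j ≠ 0 → i ≠ j → lam i ≠ lam j)
    (hdiag : Qᵀ * L * Q = Matrix.diagonal lam)
    (i : Fin n) (hQi : ∀ j, Q i j ≠ 0)
    (x : Fin n → ℝ)
    (hx : ∀ d : ℕ, 2 ≤ d → ((L ^ d).mulVec x) i = 0) :
    ∃ a : ℝ, x = fun _ => a := by
  have hlam : ∀ j, j ≠ 0 → lam j ≠ 0 := fun j hj ↦ (hlampos j hj).ne'
  have hinj : Function.Injective lam := by
    intro j k hjk
    by_contra hne
    rcases eq_or_ne j 0 with rfl | hj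
    · exact hlam k (Ne.symm hne) (hjk ▸ hlam0)
    rcases eq_or_ne k 0 with rfl | hk
    · exact hlam j hj (hjk.trans hlam0)
    exact hlamdist j k hj hk hne hjk
  have hmoments : ∀ d, 2 ≤ d → ∑ j, Q i j * (Qᵀ *ᵥ x) j * lam j ^ d = 0 := fun d hd ↦
    (pow_mulVec_apply_eq_sum hQ hdiag d x i).symm.trans (hx d hd)
  have hker : ∀ j, j ≠ 0 → (Qᵀ *ᵥ x) j = 0 := fun j hj ↦ by
    simpa [hQi j, hlam j hj] using
      forall_mul_pow_eq_zero_of_forall_sum_mul_pow_eq_zero hinj hmoments j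
  obtain ⟨a, ha⟩ := exists_col_eq_const_of_mulVec_one_eq_zero hQ hdiag hL1 hlam
  refine ⟨a * (Qᵀ *ᵥ x) 0, ?_⟩
  exact (eq_col_mul_of_transpose_mulVec_apply_eq_zero hQ hker).trans (by simp only [ha])

/-- Key lemma of Appendix E (eqs. (65)–(69)): if `e_iᵀ L^d x = 0` for all `d ≥ 2`, where
row `i` of the eigenvector matrix `Q` has all entries nonzero and `L` has simple zero
eigenvalue and distinct positive remaining eigenvalues, then `x` is a consensus vector. -/
theorem stmt_9 {n : ℕ} [NeZero n]
    (L Q : Matrix (Fin n) (Fin n) ℝ) (hLsymm : L.IsSymm)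
    (hL1 : L.mulVec (fun _ => (1:ℝ)) = 0)
    (hQ : Qᵀ * Q = 1)
    (lam : Fin n → ℝ) (hlam0 : lam 0 = 0)
    (hlampos : ∀ i : Fin n, i ≠ 0 → 0 < lam i)
    (hlamdist : ∀ i j : Fin n, i ≠ 0 → j ≠ 0 → i ≠ j → lam i ≠ lam j)
    (hdiag : Qᵀ * L * Q = Matrix.diagonal lam)
    (i : Fin n) (hQi : ∀ j, Q i j ≠ 0)
    (x : Fin n → ℝ)
    (hx : ∀ d : ℕ, 2 ≤ d → ((L ^ d).mulVec x) i = 0) :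
    ∃ a : ℝ, x = fun _ => a :=
  stmt_9_general L Q hL1 hQ lam hlam0 hlampos hlamdist hdiag i hQi x hx
end

section
/- Let N, M ≥ 1, let t₀ < t₁ < … < t_{m+1} be real numbers with dwell times τ_q = t_{q+1} − t_q, let A₀, …, A_m be N×N real matrices and C an M×N real matrix. For z₀ ∈ ℝ^N define the switched trajectory z : [t₀, t_{m+1}) → ℝ^N by z(t) = e^{A_q(t − t_q)}·z(t_q) for t ∈ [t_q, t_{q+1}), with z(t₀) = z₀. For each q let O_q be the (M·N)×N matrix obtained by stacking C, C·A_q, C·A_q², …, C·A_q^{N−1}, and define subspaces recursively by N_m = ker(O_m) and N_q = ker(O_q) ∩ {y ∈ ℝ^N : e^{A_q τ_q}·y ∈ N_{q+1}} for 0 ≤ q ≤ m−1. Then C·z(t) = 0 for all t ∈ [t₀, t_{m+1}) if and only if z₀ ∈ N₀. -/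
open Matrix

set_option maxHeartbeats 1000000

/-- Stacked observability kernel `ker(O_q)` of the pair `(A, C)`:
vectors annihilated by `C, CA, …, CA^{N−1}`. -/
def obsKer {N M : ℕ} (C : Matrix (Fin M) (Fin N) ℝ)
    (A : Matrix (Fin N) (Fin N) ℝ) : Set (Fin N → ℝ) :=
  {y | ∀ k : ℕ, k < N → (C * A ^ k).mulVec y = 0}

/-- The state-transition matrix of the switched system at the switching time `t_q`:
`transMat A τ q = e^{A_{q−1} τ_{q−1}} ⋯ e^{A_0 τ_0}`. -/
noncomputable def transMat {N : ℕ} (A : ℕ → Matrix (Fin N) (Fin N) ℝ) (τ : ℕ → ℝ) :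
    ℕ → Matrix (Fin N) (Fin N) ℝ
  | 0 => 1
  | q + 1 => NormedSpace.exp (τ q • A q) * transMat A τ q

/-- The recursively defined unobservable subspaces, indexed from the top:
`unobsSeq A C τ m j` is the paper's `N_{m−j}`, so `unobsSeq A C τ m 0 = ker(O_m)` and
`N_q = ker(O_q) ∩ {y : e^{A_q τ_q} y ∈ N_{q+1}}`. -/
noncomputable def unobsSeq {N M : ℕ} (A : ℕ → Matrix (Fin N) (Fin N) ℝ)
    (C : Matrix (Fin M) (Fin N) ℝ) (τ : ℕ → ℝ) (m : ℕ) :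
    ℕ → Set (Fin N → ℝ)
  | 0 => obsKer C (A m)
  | j + 1 => obsKer C (A (m - (j + 1))) ∩
      {y | (NormedSpace.exp (τ (m - (j + 1)) • A (m - (j + 1)))).mulVec y ∈
        unobsSeq A C τ m j}

section Aux

open NormedSpace

lemma ch_closure {N M : ℕ} (C : Matrix (Fin M) (Fin N) ℝ) (A : Matrix (Fin N) (Fin N) ℝ)
    (v : Fin N → ℝ) (h : ∀ k < N, (C * A ^ k).mulVec v = 0) :
    ∀ k, (C * A ^ k).mulVec v = 0 := by
  have hdeg : A.charpoly.natDegree = N := by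
    simpa using A.charpoly_natDegree_eq_dim
  have hAN : A ^ N = -∑ i ∈ Finset.range N, A.charpoly.coeff i • A ^ i := by
    have h0 := A.aeval_self_charpoly
    have hcN : A.charpoly.coeff N = 1 := by have := A.charpoly_monic.coeff_natDegree; rwa [hdeg] at this
    rw [Polynomial.aeval_eq_sum_range, hdeg, Finset.sum_range_succ, hcN, one_smul] at h0
    rw [add_comm] at h0
    exact eq_neg_of_add_eq_zero_left h0
  intro k
  induction k using Nat.strong_induction_on with
  | _ k ih =>
    rcases lt_or_ge k N with hk | hk
    · exact h k hk
    · have hkk : k = (k - N) + N := by omega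
      rw [hkk, pow_add, ← Matrix.mul_assoc, hAN]
      rw [Matrix.mul_neg, Matrix.neg_mulVec, Matrix.mul_sum]
      have : ∀ i ∈ Finset.range N,
          (C * A ^ (k - N) * (A.charpoly.coeff i • A ^ i)) = A.charpoly.coeff i • (C * A ^ ((k-N)+i)) := by
        intro i _
        rw [Matrix.mul_smul, pow_add, Matrix.mul_assoc]
      rw [Finset.sum_congr rfl this]
      have : (∑ i ∈ Finset.range N, A.charpoly.coeff i • (C * A ^ ((k-N)+i))).mulVec v
          = ∑ i ∈ Finset.range N, A.charpoly.coeff i • (C * A ^ ((k-N)+i)).mulVec v := by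
        rw [show ∀ B : Matrix (Fin M) (Fin N) ℝ, B.mulVec v = Matrix.mulVec.addMonoidHomLeft v B from fun _ => rfl,
          map_sum]
        exact Finset.sum_congr rfl fun i _ => by
          simp [Matrix.mulVec.addMonoidHomLeft, Matrix.smul_mulVec]
      rw [this]
      have hz : ∀ i ∈ Finset.range N, A.charpoly.coeff i • (C * A ^ ((k-N)+i)).mulVec v = 0 := by
        intro i hi
        rw [ih ((k-N)+i) (by simp at hi; omega), smul_zero]
      rw [Finset.sum_congr rfl hz]
      simp
lemma exp_series_zero {N M : ℕ} (C : Matrix (Fin M) (Fin N) ℝ) (A : Matrix (Fin N) (Fin N) ℝ)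
    (w : Fin N → ℝ) (h : ∀ k, (C * A ^ k).mulVec w = 0) (n : ℕ) (s : ℝ) :
    (C * A ^ n * exp (s • A)).mulVec w = 0 := by
  letI : SeminormedRing (Matrix (Fin N) (Fin N) ℝ) := Matrix.linftyOpSemiNormedRing
  letI : NormedRing (Matrix (Fin N) (Fin N) ℝ) := Matrix.linftyOpNormedRing
  letI : NormedAlgebra ℝ (Matrix (Fin N) (Fin N) ℝ) := Matrix.linftyOpNormedAlgebra
  let L : Matrix (Fin N) (Fin N) ℝ →ₗ[ℝ] (Fin M → ℝ) :=
    { toFun := fun B => (C * A ^ n * B).mulVec w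
      map_add' := fun B₁ B₂ => by
        show (C * A ^ n * (B₁ + B₂)).mulVec w = (C * A ^ n * B₁).mulVec w + (C * A ^ n * B₂).mulVec w
        rw [Matrix.mul_add, Matrix.add_mulVec]
      map_smul' := fun c B => by
        show (C * A ^ n * (c • B)).mulVec w = c • (C * A ^ n * B).mulVec w
        rw [Matrix.mul_smul, Matrix.smul_mulVec] }
  have hL : Continuous L := L.continuous_of_finiteDimensional
  have hsum : Summable fun k : ℕ => ((Nat.factorial k : ℝ)⁻¹) • (s • A) ^ k :=
    expSeries_summable' (𝕂 := ℝ) (s • A)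
  have hexp : exp (s • A) = ∑' k : ℕ, ((Nat.factorial k : ℝ)⁻¹) • (s • A) ^ k := by
    rw [exp_eq_tsum ℝ]
  let Lc : Matrix (Fin N) (Fin N) ℝ →L[ℝ] (Fin M → ℝ) := { toLinearMap := L, cont := hL }
  have key : Lc (exp (s • A)) = 0 := by
    rw [hexp, Lc.map_tsum hsum]
    have hz : ∀ k : ℕ, Lc (((Nat.factorial k : ℝ)⁻¹) • (s • A) ^ k) = 0 := by
      intro k
      have h2 : (C * A ^ n * (s • A) ^ k).mulVec w = 0 := by
        rw [smul_pow, Matrix.mul_smul, Matrix.smul_mulVec, Matrix.mul_assoc, ← pow_add,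
          h (n + k), smul_zero]
      calc Lc (((Nat.factorial k : ℝ)⁻¹) • (s • A) ^ k)
          = ((Nat.factorial k : ℝ)⁻¹) • Lc ((s • A) ^ k) := by rw [_root_.map_smul]
        _ = ((Nat.factorial k : ℝ)⁻¹) • (C * A ^ n * (s • A) ^ k).mulVec w := rfl
        _ = 0 := by rw [h2, smul_zero]
    rw [tsum_congr hz]
    exact tsum_zero
  exact key

lemma ico_to_all {N M : ℕ} (C : Matrix (Fin M) (Fin N) ℝ) (A : Matrix (Fin N) (Fin N) ℝ)
    (v : Fin N → ℝ) {ε : ℝ} (hε : 0 < ε)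
    (h : ∀ s ∈ Set.Ico (0:ℝ) ε, C.mulVec ((exp (s • A)).mulVec v) = 0) :
    ∀ k, (C * A ^ k).mulVec v = 0 := by
  letI : SeminormedRing (Matrix (Fin N) (Fin N) ℝ) := Matrix.linftyOpSemiNormedRing
  letI : NormedRing (Matrix (Fin N) (Fin N) ℝ) := Matrix.linftyOpNormedRing
  letI : NormedAlgebra ℝ (Matrix (Fin N) (Fin N) ℝ) := Matrix.linftyOpNormedAlgebra
  -- the continuous linear maps B ↦ (C * Aⁿ * B) *ᵥ v
  let L : ℕ → (Matrix (Fin N) (Fin N) ℝ →L[ℝ] (Fin M → ℝ)) := fun n =>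
    { toLinearMap :=
      { toFun := fun B => (C * A ^ n * B).mulVec v
        map_add' := fun B₁ B₂ => by
          show (C * A ^ n * (B₁ + B₂)).mulVec v = (C * A ^ n * B₁).mulVec v + (C * A ^ n * B₂).mulVec v
          rw [Matrix.mul_add, Matrix.add_mulVec]
        map_smul' := fun c B => by
          show (C * A ^ n * (c • B)).mulVec v = c • (C * A ^ n * B).mulVec v
          rw [Matrix.mul_smul, Matrix.smul_mulVec] }
      cont := (continuous_const.matrix_mul continuous_id).matrix_mulVec continuous_const }
  have step1 : ∀ n, ∀ s ∈ Set.Ioo (0:ℝ) ε, (C * A ^ n * exp (s • A)).mulVec v = 0 := by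
    intro n
    induction n with
    | zero =>
      intro s hs
      have := h s ⟨le_of_lt hs.1, hs.2⟩
      rw [pow_zero, Matrix.mul_one, ← Matrix.mulVec_mulVec]
      exact this
    | succ n IH =>
      intro s hs
      have hd : HasDerivAt (fun u : ℝ => exp (u • A)) (A * exp (s • A)) s :=
        hasDerivAt_exp_smul_const' A s
      have hg : HasDerivAt (fun u : ℝ => (L n) (exp (u • A))) ((L n) (A * exp (s • A))) s :=
        (L n).hasFDerivAt.comp_hasDerivAt s hd
      have hev : (fun u : ℝ => (L n) (exp (u • A))) =ᶠ[nhds s] (fun _ => 0) := by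
        filter_upwards [Ioo_mem_nhds hs.1 hs.2] with u hu
        exact IH u hu
      have hg0 : HasDerivAt (fun u : ℝ => (L n) (exp (u • A))) 0 s :=
        (hasDerivAt_const s (0 : Fin M → ℝ)).congr_of_eventuallyEq hev
      have hzero : (L n) (A * exp (s • A)) = 0 := hg.unique hg0
      calc (C * A ^ (n+1) * exp (s • A)).mulVec v
          = (C * A ^ n * (A * exp (s • A))).mulVec v := by
            rw [pow_succ, ← Matrix.mul_assoc, Matrix.mul_assoc (C * A ^ n) A _]
        _ = (L n) (A * exp (s • A)) := rfl
        _ = 0 := hzero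
  set s₀ : ℝ := ε / 2 with hs₀def
  have hs₀ : s₀ ∈ Set.Ioo (0:ℝ) ε := ⟨by positivity, by rw [hs₀def]; linarith⟩
  set w : Fin N → ℝ := (exp (s₀ • A)).mulVec v with hwdef
  have hw : ∀ k, (C * A ^ k).mulVec w = 0 := by
    intro k
    rw [hwdef, Matrix.mulVec_mulVec]
    exact step1 k s₀ hs₀
  have hinv : exp ((-s₀) • A) * exp (s₀ • A) = 1 := by
    rw [← Matrix.exp_add_of_commute _ _ (((Commute.refl A).smul_left (-s₀)).smul_right s₀),
      ← add_smul, neg_add_cancel, zero_smul, exp_zero]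
  intro k
  have h0 := exp_series_zero C A w hw k (-s₀)
  rw [hwdef, Matrix.mulVec_mulVec, Matrix.mul_assoc (C * A ^ k) _ _, hinv,
    Matrix.mul_one] at h0
  exact h0

/-- Characterization of output vanishing on an interval `[a, b)`. -/
lemma interval_char {N M : ℕ} (C : Matrix (Fin M) (Fin N) ℝ) (A : Matrix (Fin N) (Fin N) ℝ)
    (v : Fin N → ℝ) {a b : ℝ} (hab : a < b) :
    (∀ s ∈ Set.Ico a b, C.mulVec ((exp ((s - a) • A)).mulVec v) = 0) ↔ v ∈ obsKer C A := by
  constructor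
  · intro h k hk
    refine ico_to_all C A v (show (0:ℝ) < b - a by linarith) ?_ k
    intro u hu
    have := h (u + a) ⟨by linarith [hu.1], by linarith [hu.2]⟩
    rwa [add_sub_cancel_right] at this
  · intro hv s _
    have hall := ch_closure C A v hv
    have h0 := exp_series_zero C A v hall 0 (s - a)
    rw [pow_zero, Matrix.mul_one, ← Matrix.mulVec_mulVec] at h0
    exact h0

/-- The main downward induction. -/
lemma main_aux {N M : ℕ} (m : ℕ) (t : ℕ → ℝ) (ht : ∀ q ≤ m, t q < t (q + 1))
    (A : ℕ → Matrix (Fin N) (Fin N) ℝ) (C : Matrix (Fin M) (Fin N) ℝ) (z₀ : Fin N → ℝ) :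
    ∀ j ≤ m,
      ((∀ q, m - j ≤ q → q ≤ m → ∀ s ∈ Set.Ico (t q) (t (q + 1)),
        C.mulVec ((exp ((s - t q) • A q) *
          transMat A (fun l => t (l + 1) - t l) q).mulVec z₀) = 0) ↔
        (transMat A (fun l => t (l + 1) - t l) (m - j)).mulVec z₀ ∈
          unobsSeq A C (fun l => t (l + 1) - t l) m j) := by
  set τ : ℕ → ℝ := fun l => t (l + 1) - t l with hτ
  intro j
  induction j with
  | zero =>
    intro _
    rw [Nat.sub_zero]
    constructor
    · intro h
      show (transMat A τ m).mulVec z₀ ∈ obsKer C (A m)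
      rw [← interval_char C (A m) _ (ht m le_rfl)]
      intro s hs
      have := h m le_rfl le_rfl s hs
      rwa [← Matrix.mulVec_mulVec] at this
    · intro h q hq1 hq2 s hs
      have hqm : q = m := le_antisymm hq2 hq1
      subst hqm
      have h2 := (interval_char C (A q) ((transMat A τ q).mulVec z₀) (ht q le_rfl)).mpr h s hs
      rw [← Matrix.mulVec_mulVec]
      exact h2
  | succ j IH =>
    intro hj1
    have hj : j ≤ m := by omega
    have hq0 : m - j = (m - (j + 1)) + 1 := by omega
    have hT : exp (τ (m - (j+1)) • A (m - (j+1))) * transMat A τ (m - (j+1)) =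
        transMat A τ (m - j) := by
      rw [hq0]
      rfl
    rw [show unobsSeq A C τ m (j+1) = obsKer C (A (m - (j+1))) ∩
      {y | exp (τ (m-(j+1)) • A (m-(j+1))) *ᵥ y ∈ unobsSeq A C τ m j} from rfl]
    rw [Set.mem_inter_iff, Set.mem_setOf_eq, Matrix.mulVec_mulVec, hT]
    constructor
    · intro h
      refine ⟨?_, (IH hj).mp (fun q hql hqr s hs => h q (by omega) hqr s hs)⟩
      rw [← interval_char C (A (m - (j+1))) _ (ht (m - (j+1)) (by omega))]
      intro s hs
      have := h (m - (j+1)) le_rfl (by omega) s hs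
      rwa [← Matrix.mulVec_mulVec] at this
    · rintro ⟨h1, h2⟩ q hql hqr s hs
      rcases Nat.eq_or_lt_of_le hql with rfl | hlt
      · have h3 := (interval_char C (A (m-(j+1)))
          ((transMat A τ (m-(j+1))).mulVec z₀) (ht (m - (j+1)) (by omega))).mpr h1 s hs
        rw [← Matrix.mulVec_mulVec]
        exact h3
      · exact (IH hj).mpr h2 q (by omega) hqr s hs

end Aux

/-- Observability characterization for switched linear systems (Lemma 1 / Appendix C):
the output of the unforced switched system `ż = A_{σ(t)} z`, `y = Cz` vanishes on
`[t₀, t_{m+1})` iff the initial state lies in the recursively defined subspace `N₀`. -/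
theorem stmt_12 {N M : ℕ} (m : ℕ)
    (t : ℕ → ℝ) (ht : ∀ q ≤ m, t q < t (q + 1))
    (A : ℕ → Matrix (Fin N) (Fin N) ℝ) (C : Matrix (Fin M) (Fin N) ℝ)
    (z₀ : Fin N → ℝ) :
    (∀ q ≤ m, ∀ s ∈ Set.Ico (t q) (t (q + 1)),
      C.mulVec ((NormedSpace.exp ((s - t q) • A q) *
        transMat A (fun l => t (l + 1) - t l) q).mulVec z₀) = 0) ↔
      z₀ ∈ unobsSeq A C (fun l => t (l + 1) - t l) m m := by
  have h := main_aux m t ht A C z₀ m le_rfl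
  rw [Nat.sub_self] at h
  simp only [transMat, Matrix.one_mulVec] at h
  constructor
  · intro hmain
    exact h.mp (fun q _ hq s hs => hmain q hq s hs)
  · intro hz q hq s hs
    exact h.mpr hz q (Nat.zero_le q) hq s hs
end

section
/- Let P be an N×N real symmetric positive definite matrix, let A₀, …, A_{l−1} be N×N real matrices, let c₀, …, c_{l−1} be real numbers such that A_sᵀ·P + P·A_s ≼ 2·c_s·P in the Loewner order for each s, and let τ₀, …, τ_{l−1} > 0 satisfy Σ_{s=0}^{l−1} τ_s·c_s < 0. Let M = e^{A_{l−1} τ_{l−1}} · e^{A_{l−2} τ_{l−2}} ⋯ e^{A_0 τ_0} be the monodromy matrix of one period. Then for every x ∈ ℝ^N, M^k·x → 0 as k → ∞; that is, every solution of the periodically switched linear system ż = A_{σ(t)} z with this dwell-time schedule converges to zero. -/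
set_option maxHeartbeats 1000000

open Matrix

section Aux
open NormedSpace

attribute [local instance] Matrix.linftyOpNormedRing Matrix.linftyOpNormedAlgebra

noncomputable def mulVecR {N : ℕ} (x : Fin N → ℝ) :
    Matrix (Fin N) (Fin N) ℝ →L[ℝ] (Fin N → ℝ) :=
  LinearMap.toContinuousLinearMap
    { toFun := fun M => M *ᵥ x
      map_add' := fun M N' => Matrix.add_mulVec M N' x
      map_smul' := fun r M => Matrix.smul_mulVec r M x }

@[simp] lemma mulVecR_apply {N : ℕ} (x : Fin N → ℝ) (M : Matrix (Fin N) (Fin N) ℝ) :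
    mulVecR x M = M *ᵥ x := rfl

lemma dot_sum_eq {N : ℕ} (P : Matrix (Fin N) (Fin N) ℝ) (v w : Fin N → ℝ) :
    (∑ i, ∑ j, v i * (P i j * w j)) = v ⬝ᵥ P *ᵥ w := by
  simp [dotProduct, Matrix.mulVec, Finset.mul_sum]

lemma mulVec_dot_shift {N : ℕ} (M P : Matrix (Fin N) (Fin N) ℝ) (v w : Fin N → ℝ) :
    (M *ᵥ v) ⬝ᵥ (P *ᵥ w) = v ⬝ᵥ ((Mᵀ * P) *ᵥ w) := by
  rw [Matrix.dotProduct_mulVec v (Mᵀ * P) w, ← Matrix.vecMul_vecMul,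
    Matrix.vecMul_transpose, ← Matrix.dotProduct_mulVec]

lemma key1 {N : ℕ} (B P : Matrix (Fin N) (Fin N) ℝ)
    (c : ℝ) (hb : ((2 * c) • P - Bᵀ * P - P * B).PosSemidef)
    (x : Fin N → ℝ) {t : ℝ} (ht : 0 ≤ t) :
    (exp (t • B) *ᵥ x) ⬝ᵥ P *ᵥ (exp (t • B) *ᵥ x)
      ≤ Real.exp (2 * c * t) * (x ⬝ᵥ P *ᵥ x) := by
  set u : ℝ → Fin N → ℝ := fun s => exp (s • B) *ᵥ x with hu_def
  have hu : ∀ s : ℝ, HasDerivAt u (B *ᵥ u s) s := by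
    intro s
    have h1 := hasDerivAt_exp_smul_const (𝕂 := ℝ) B s
    have h2 := (mulVecR x).hasFDerivAt.comp_hasDerivAt s h1
    have hc : exp (s • B) * B = B * exp (s • B) :=
      (((Commute.refl B).smul_left s).exp_left).eq
    have h3 : HasDerivAt u ((exp (s • B) * B) *ᵥ x) s := h2
    rw [hc, ← Matrix.mulVec_mulVec] at h3
    exact h3
  have hui : ∀ (s : ℝ) (i : Fin N), HasDerivAt (fun r => u r i) ((B *ᵥ u s) i) s := by
    intro s i
    exact (ContinuousLinearMap.proj (R := ℝ) (φ := fun _ : Fin N => ℝ)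
      i).hasFDerivAt.comp_hasDerivAt s (hu s)
  set φ : ℝ → ℝ := fun s => u s ⬝ᵥ P *ᵥ u s with hφ_def
  have hφ : ∀ s : ℝ, HasDerivAt φ
      ((B *ᵥ u s) ⬝ᵥ (P *ᵥ u s) + u s ⬝ᵥ (P *ᵥ (B *ᵥ u s))) s := by
    intro s
    have h1 : HasDerivAt (fun r => ∑ i, ∑ j, u r i * (P i j * u r j))
        (∑ i, ∑ j, ((B *ᵥ u s) i * (P i j * u s j) + u s i * (P i j * (B *ᵥ u s) j))) s := by
      refine HasDerivAt.fun_sum (fun i _ => HasDerivAt.fun_sum (fun j _ => ?_))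
      exact (hui s i).mul ((hui s j).const_mul (P i j))
    have h2 : (fun r => ∑ i, ∑ j, u r i * (P i j * u r j)) = φ := by
      funext r; exact dot_sum_eq P (u r) (u r)
    have h3 : (∑ i, ∑ j, ((B *ᵥ u s) i * (P i j * u s j) + u s i * (P i j * (B *ᵥ u s) j)))
        = (B *ᵥ u s) ⬝ᵥ (P *ᵥ u s) + u s ⬝ᵥ (P *ᵥ (B *ᵥ u s)) := by
      rw [← dot_sum_eq P (B *ᵥ u s) (u s), ← dot_sum_eq P (u s) (B *ᵥ u s)]
      rw [← Finset.sum_add_distrib]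
      exact Finset.sum_congr rfl fun i _ => Finset.sum_add_distrib
    rw [← h2]; rw [← h3]; exact h1
  -- the derivative bound
  have hderiv_le : ∀ s : ℝ,
      (B *ᵥ u s) ⬝ᵥ (P *ᵥ u s) + u s ⬝ᵥ (P *ᵥ (B *ᵥ u s)) ≤ 2 * c * φ s := by
    intro s
    have h0 := hb.dotProduct_mulVec_nonneg (u s)
    have e1 : (B *ᵥ u s) ⬝ᵥ (P *ᵥ u s) = u s ⬝ᵥ ((Bᵀ * P) *ᵥ u s) :=
      mulVec_dot_shift B P (u s) (u s)
    have e2 : u s ⬝ᵥ (P *ᵥ (B *ᵥ u s)) = u s ⬝ᵥ ((P * B) *ᵥ u s) := by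
      rw [Matrix.mulVec_mulVec]
    have h0' : 0 ≤ 2 * c * (u s ⬝ᵥ P *ᵥ u s) - u s ⬝ᵥ ((Bᵀ * P) *ᵥ u s)
        - u s ⬝ᵥ ((P * B) *ᵥ u s) := by
      simpa [Matrix.sub_mulVec, Matrix.smul_mulVec, dotProduct_sub,
        dotProduct_smul, smul_eq_mul] using h0
    rw [e1, e2]; simp only [hφ_def]; linarith
  set ψ : ℝ → ℝ := fun s => Real.exp (-(2 * c) * s) * φ s with hψ_def
  have hψ : ∀ s : ℝ, HasDerivAt ψ
      (-(2 * c) * Real.exp (-(2 * c) * s) * φ s + Real.exp (-(2 * c) * s) *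
        ((B *ᵥ u s) ⬝ᵥ (P *ᵥ u s) + u s ⬝ᵥ (P *ᵥ (B *ᵥ u s)))) s := by
    intro s
    have he : HasDerivAt (fun r : ℝ => Real.exp (-(2 * c) * r))
        (-(2 * c) * Real.exp (-(2 * c) * s)) s := by
      have := (((hasDerivAt_id s).const_mul (-(2 * c)))).exp
      simp only [id_eq] at this
      convert this using 1
      ring
    exact he.mul (hφ s)
  have hanti : Antitone ψ := by
    apply antitone_of_deriv_nonpos
    · exact fun s => (hψ s).differentiableAt
    · intro s
      rw [(hψ s).deriv]
      have h1 := hderiv_le s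
      have h2 : (0:ℝ) < Real.exp (-(2 * c) * s) := Real.exp_pos _
      nlinarith [h2.le]
  have h := hanti ht
  have hψ0 : ψ 0 = x ⬝ᵥ P *ᵥ x := by
    simp [hψ_def, hφ_def, hu_def]
  rw [hψ0] at h
  have h2 : Real.exp (-(2 * c) * t) * φ t ≤ x ⬝ᵥ P *ᵥ x := h
  have h3 : (0:ℝ) < Real.exp (-(2 * c) * t) := Real.exp_pos _
  rw [show -(2 * c) * t = -(2 * c * t) by ring, Real.exp_neg] at h2
  have h4 : φ t ≤ Real.exp (2 * c * t) * (x ⬝ᵥ P *ᵥ x) :=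
    (inv_mul_le_iff₀ (Real.exp_pos _)).mp h2
  exact h4

lemma key2 {N : ℕ} {l : ℕ} (P : Matrix (Fin N) (Fin N) ℝ)
    (A : Fin l → Matrix (Fin N) (Fin N) ℝ) (c : Fin l → ℝ)
    (hbound : ∀ s : Fin l, ((2 * c s) • P - (A s)ᵀ * P - P * A s).PosSemidef)
    (τ : Fin l → ℝ) (hτ : ∀ s, 0 ≤ τ s) :
    ∀ (L : List (Fin l)) (x : Fin N → ℝ),
      ((L.reverse.map (fun s => exp (τ s • A s))).prod *ᵥ x) ⬝ᵥ
        P *ᵥ ((L.reverse.map (fun s => exp (τ s • A s))).prod *ᵥ x)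
      ≤ Real.exp (2 * (L.map (fun s => τ s * c s)).sum) * (x ⬝ᵥ P *ᵥ x) := by
  intro L
  induction L with
  | nil => intro x; simp
  | cons a L ih =>
    intro x
    have hstep := key1 (A a) P (c a) (hbound a) x (hτ a)
    have hrw : ((a :: L).reverse.map (fun s => exp (τ s • A s))).prod
        = (L.reverse.map (fun s => exp (τ s • A s))).prod * exp (τ a • A a) := by
      simp
    rw [hrw, ← Matrix.mulVec_mulVec]
    have h1 := ih (exp (τ a • A a) *ᵥ x)
    have h2 : Real.exp (2 * (L.map (fun s => τ s * c s)).sum) *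
        ((exp (τ a • A a) *ᵥ x) ⬝ᵥ P *ᵥ (exp (τ a • A a) *ᵥ x))
        ≤ Real.exp (2 * (L.map (fun s => τ s * c s)).sum) *
          (Real.exp (2 * c a * τ a) * (x ⬝ᵥ P *ᵥ x)) :=
      mul_le_mul_of_nonneg_left hstep (Real.exp_pos _).le
    calc _ ≤ _ := h1
      _ ≤ _ := h2
      _ = Real.exp (2 * ((a :: L).map (fun s => τ s * c s)).sum) * (x ⬝ᵥ P *ᵥ x) := by
          rw [← mul_assoc, ← Real.exp_add, List.map_cons, List.sum_cons]
          congr 2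
          ring


end Aux

open scoped MatrixOrder in
lemma sqrt_aux {N : ℕ} (P : Matrix (Fin N) (Fin N) ℝ) (hP : P.PosSemidef) :
    ∃ Q : Matrix (Fin N) (Fin N) ℝ, Q * Q = P ∧ Qᵀ = Q := by
  refine ⟨CFC.sqrt P, CFC.sqrt_mul_sqrt_self P (Matrix.nonneg_iff_posSemidef.mpr hP), ?_⟩
  have h := (Matrix.nonneg_iff_posSemidef.mp (CFC.sqrt_nonneg P)).isHermitian
  rwa [Matrix.IsHermitian, Matrix.conjTranspose_eq_transpose_of_trivial] at h

open NormedSpace in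
/-- Lemma 4 (Porfiri et al.): if `μ_P(A_s) ≤ c_s` (expressed as the Loewner inequality
`A_sᵀ P + P A_s ≼ 2 c_s P`) and `Σ τ_s c_s < 0`, then the monodromy matrix
`M = e^{A_{l−1} τ_{l−1}} ⋯ e^{A_0 τ_0}` of the periodically switched system satisfies
`M^k x → 0` for every `x`. -/
theorem stmt_14 {N : ℕ} (l : ℕ)
    (P : Matrix (Fin N) (Fin N) ℝ) (hP : P.PosDef)
    (A : Fin l → Matrix (Fin N) (Fin N) ℝ) (c : Fin l → ℝ)
    (hbound : ∀ s : Fin l, ((2 * c s) • P - (A s)ᵀ * P - P * A s).PosSemidef)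
    (τ : Fin l → ℝ) (hτ : ∀ s, 0 < τ s)
    (hsum : ∑ s, τ s * c s < 0)
    (Mmat : Matrix (Fin N) (Fin N) ℝ)
    (hM : Mmat = ((List.finRange l).reverse.map
      (fun s => NormedSpace.exp (τ s • A s))).prod) :
    ∀ x : Fin N → ℝ,
      Filter.Tendsto (fun k : ℕ => (Mmat ^ k).mulVec x) Filter.atTop (nhds 0) := by
  intro x
  set ρ : ℝ := Real.exp (2 * ∑ s, τ s * c s) with hρ_def
  have hρ_pos : 0 < ρ := Real.exp_pos _
  have hρ_lt : ρ < 1 := Real.exp_lt_one_iff.mpr (by nlinarith)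
  -- one-period contraction
  have hMstep : ∀ y : Fin N → ℝ,
      (Mmat *ᵥ y) ⬝ᵥ P *ᵥ (Mmat *ᵥ y) ≤ ρ * (y ⬝ᵥ P *ᵥ y) := by
    intro y
    have h := key2 P A c hbound τ (fun s => (hτ s).le) (List.finRange l) y
    rw [← hM] at h
    have hsum_eq : ((List.finRange l).map (fun s => τ s * c s)).sum
        = ∑ s, τ s * c s := by
      rw [Fin.sum_univ_def]
    rwa [hsum_eq] at h
  -- iterate
  have hiter : ∀ k : ℕ, ((Mmat ^ k) *ᵥ x) ⬝ᵥ P *ᵥ ((Mmat ^ k) *ᵥ x)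
      ≤ ρ ^ k * (x ⬝ᵥ P *ᵥ x) := by
    intro k
    induction k with
    | zero => simp
    | succ k ih =>
      have h1 : Mmat ^ (k + 1) *ᵥ x = Mmat *ᵥ (Mmat ^ k *ᵥ x) := by
        rw [Matrix.mulVec_mulVec, ← pow_succ']
      rw [h1, pow_succ']
      calc (Mmat *ᵥ (Mmat ^ k *ᵥ x)) ⬝ᵥ P *ᵥ (Mmat *ᵥ (Mmat ^ k *ᵥ x))
          ≤ ρ * ((Mmat ^ k *ᵥ x) ⬝ᵥ P *ᵥ (Mmat ^ k *ᵥ x)) := hMstep _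
        _ ≤ ρ * (ρ ^ k * (x ⬝ᵥ P *ᵥ x)) := mul_le_mul_of_nonneg_left ih hρ_pos.le
        _ = ρ * ρ ^ k * (x ⬝ᵥ P *ᵥ x) := by ring
  -- quadratic form tends to zero
  have hV0 : Filter.Tendsto (fun k : ℕ => ((Mmat ^ k) *ᵥ x) ⬝ᵥ P *ᵥ ((Mmat ^ k) *ᵥ x))
      Filter.atTop (nhds 0) := by
    have hub : Filter.Tendsto (fun k : ℕ => ρ ^ k * (x ⬝ᵥ P *ᵥ x)) Filter.atTop (nhds 0) := by
      simpa using (tendsto_pow_atTop_nhds_zero_of_lt_one hρ_pos.le hρ_lt).mul_const (x ⬝ᵥ P *ᵥ x)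
    refine squeeze_zero (fun k => ?_) (fun k => hiter k) hub
    have := hP.posSemidef.dotProduct_mulVec_nonneg ((Mmat ^ k) *ᵥ x)
    simpa using this
  -- square root of P
  obtain ⟨Q, hQQ, hQsymm⟩ := sqrt_aux P hP.posSemidef
  have hquad : ∀ v : Fin N → ℝ, v ⬝ᵥ P *ᵥ v = (Q *ᵥ v) ⬝ᵥ (Q *ᵥ v) := by
    intro v
    rw [mulVec_dot_shift Q Q v v, hQsymm, hQQ]
  -- Q (M^k x) → 0
  have hQtend : Filter.Tendsto (fun k : ℕ => Q *ᵥ ((Mmat ^ k) *ᵥ x))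
      Filter.atTop (nhds 0) := by
    rw [tendsto_pi_nhds]
    intro i
    have hsq : Filter.Tendsto (fun k : ℕ =>
        Real.sqrt (((Mmat ^ k) *ᵥ x) ⬝ᵥ P *ᵥ ((Mmat ^ k) *ᵥ x))) Filter.atTop (nhds 0) := by
      have := (Real.continuous_sqrt.tendsto 0).comp hV0
      simpa [Function.comp_def] using this
    refine squeeze_zero_norm (fun k => ?_) hsq
    set w : Fin N → ℝ := Q *ᵥ ((Mmat ^ k) *ᵥ x) with hw
    have h1 : (w i) ^ 2 ≤ w ⬝ᵥ w := by
      have : w ⬝ᵥ w = ∑ j, (w j) ^ 2 := by simp [dotProduct, sq]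
      rw [this]
      exact Finset.single_le_sum (fun j _ => sq_nonneg (w j)) (Finset.mem_univ i)
    have h2 : |w i| ≤ Real.sqrt (w ⬝ᵥ w) := by
      rw [← Real.sqrt_sq_eq_abs]
      exact Real.sqrt_le_sqrt h1
    rw [hquad, Real.norm_eq_abs]
    exact h2
  -- invert Q
  have hdet : IsUnit Q.det := by
    have h1 : Q.det * Q.det = P.det := by rw [← Matrix.det_mul, hQQ]
    have h2 : P.det ≠ 0 := ne_of_gt hP.det_pos
    have : Q.det ≠ 0 := fun h => h2 (by rw [← h1, h, mul_zero])
    exact isUnit_iff_ne_zero.mpr this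
  have hQinv : ∀ v : Fin N → ℝ, Q⁻¹ *ᵥ (Q *ᵥ v) = v := by
    intro v
    rw [Matrix.mulVec_mulVec, Matrix.nonsing_inv_mul Q hdet, Matrix.one_mulVec]
  have hcont : Continuous (fun w : Fin N → ℝ => Q⁻¹ *ᵥ w) :=
    LinearMap.continuous_of_finiteDimensional (Matrix.mulVecLin Q⁻¹)
  have := (hcont.tendsto 0).comp hQtend
  have hfinal := this.congr fun k => hQinv (Mmat ^ k *ᵥ x)
  simpa [Matrix.mulVec_zero] using hfinal
end

section
/- Let L₀, …, L_{k} be n×n real matrices with L_s·1ₙ = 0 for every s, let τ₀, …, τ_k > 0, and let A_s be the 2n×2n block matrix [[0_{n×n}, I_n],[−L_s, −I_n]]. Define the consensus subspace S = {(x, v) ∈ ℝⁿ × ℝⁿ : x ∈ span{1ₙ} and v ∈ span{1ₙ}} and the transition matrix Φ = e^{A_k τ_k} ⋯ e^{A_1 τ_1} · e^{A_0 τ_0}. Then for every z ∈ ℝ^{2n}, Φ·z ∈ S if and only if z ∈ S. In particular, the switched second-order consensus dynamics ẋ = v, v̇ = −v − L_{σ(t)} x reach exact consensus (all positions equal and all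 velocities equal) at some finite switching time if and only if the initial positions are all equal and the initial velocities are all equal. -/
open Matrix

noncomputable section Stmt16Aux

variable {n : ℕ}

/-- The consensus subspace. -/
def Scons (n : ℕ) : Submodule ℝ (Fin n ⊕ Fin n → ℝ) :=
  Submodule.span ℝ {Sum.elim (fun _ => (1:ℝ)) (fun _ => (0:ℝ)),
    Sum.elim (fun _ => (0:ℝ)) (fun _ => (1:ℝ))}

lemma mem_Scons_iff (z : Fin n ⊕ Fin n → ℝ) :
    z ∈ Scons n ↔ ∃ a b : ℝ, z = Sum.elim (fun _ : Fin n => a) (fun _ : Fin n => b) := by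
  rw [Scons, Submodule.mem_span_pair]
  constructor
  · rintro ⟨a, b, rfl⟩
    exact ⟨a, b, by funext x; cases x <;> simp⟩
  · rintro ⟨a, b, rfl⟩
    exact ⟨a, b, by funext x; cases x <;> simp⟩

/-- If `M` preserves the consensus subspace, so does `exp ℝ M`. -/
lemma exp_preserves (M : Matrix (Fin n ⊕ Fin n) (Fin n ⊕ Fin n) ℝ)
    (hM : ∀ z ∈ Scons n, M.mulVec z ∈ Scons n) :
    ∀ z ∈ Scons n, (NormedSpace.exp M).mulVec z ∈ Scons n := by
  intro z hz
  have hpow : ∀ k : ℕ, (M ^ k).mulVec z ∈ Scons n := by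
    intro k
    induction k with
    | zero => simpa using hz
    | succ k ih =>
      rw [pow_succ', ← Matrix.mulVec_mulVec]
      exact hM _ ih
  letI : SeminormedRing (Matrix (Fin n ⊕ Fin n) (Fin n ⊕ Fin n) ℝ) :=
    Matrix.linftyOpSemiNormedRing
  letI : NormedRing (Matrix (Fin n ⊕ Fin n) (Fin n ⊕ Fin n) ℝ) :=
    Matrix.linftyOpNormedRing
  letI : NormedAlgebra ℝ (Matrix (Fin n ⊕ Fin n) (Fin n ⊕ Fin n) ℝ) :=
    Matrix.linftyOpNormedAlgebra
  -- evaluation map `N ↦ N.mulVec z` as a continuous linear map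
  let ev : Matrix (Fin n ⊕ Fin n) (Fin n ⊕ Fin n) ℝ →ₗ[ℝ] (Fin n ⊕ Fin n → ℝ) :=
    { toFun := fun N => N.mulVec z
      map_add' := fun N₁ N₂ => Matrix.add_mulVec N₁ N₂ z
      map_smul' := fun c N => (Matrix.smul_mulVec c N z) }
  have hev : Continuous ev := ev.continuous_of_finiteDimensional
  have hsum : Summable fun k : ℕ => (((Nat.factorial k : ℕ) : ℝ)⁻¹) • M ^ k :=
    NormedSpace.expSeries_summable' (𝕂 := ℝ) M
  have hExp : NormedSpace.exp M = ∑' k : ℕ, (((Nat.factorial k : ℕ) : ℝ)⁻¹) • M ^ k := by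
    rw [NormedSpace.exp_eq_tsum (𝕂 := ℝ)]
  have hHasSum : HasSum (fun k : ℕ => (((Nat.factorial k : ℕ) : ℝ)⁻¹) • M ^ k) (NormedSpace.exp M) := by
    rw [hExp]; exact hsum.hasSum
  have hmap : HasSum (fun k : ℕ => ev ((((Nat.factorial k : ℕ) : ℝ)⁻¹) • M ^ k))
      (ev (NormedSpace.exp M)) := hHasSum.map ev hev
  have hclosed : IsClosed ((Scons n : Set (Fin n ⊕ Fin n → ℝ))) :=
    Submodule.closed_of_finiteDimensional _
  have hterm : ∀ k : ℕ, ev ((((Nat.factorial k : ℕ) : ℝ)⁻¹) • M ^ k) ∈ Scons n := by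
    intro k
    have : ev ((((Nat.factorial k : ℕ) : ℝ)⁻¹) • M ^ k) = (((Nat.factorial k : ℕ) : ℝ)⁻¹) • ((M ^ k).mulVec z) := ev.map_smul _ _
    rw [this]
    exact Submodule.smul_mem _ _ (hpow k)
  have : ev (NormedSpace.exp M) ∈ Scons n := by
    refine hclosed.mem_of_tendsto hmap (Filter.Eventually.of_forall ?_)
    intro s
    exact Submodule.sum_mem _ fun k _ => hterm k
  exact this

lemma matrix_preserves {n : ℕ} (L : Matrix (Fin n) (Fin n) ℝ)
    (hL : L.mulVec (fun _ => (1:ℝ)) = 0) (t : ℝ) :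
    ∀ z ∈ Scons n, (t • (Matrix.fromBlocks 0 1 (-L) (-1) :
      Matrix (Fin n ⊕ Fin n) (Fin n ⊕ Fin n) ℝ)).mulVec z ∈ Scons n := by
  intro z hz
  rw [mem_Scons_iff] at hz
  obtain ⟨a, b, rfl⟩ := hz
  have hLa : L.mulVec (fun _ : Fin n => a) = 0 := by
    have : (fun _ : Fin n => a) = a • (fun _ : Fin n => (1:ℝ)) := by
      funext i; simp
    rw [this, Matrix.mulVec_smul, hL, smul_zero]
  rw [mem_Scons_iff]
  refine ⟨t * b, t * (-a * 0 - b), ?_⟩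
  rw [Matrix.smul_mulVec]
  rw [show (Sum.elim (fun _ : Fin n => a) (fun _ : Fin n => b)) =
    Sum.elim (fun _ : Fin n => a) (fun _ : Fin n => b) from rfl]
  rw [Matrix.fromBlocks_mulVec]
  funext x
  cases x with
  | inl i =>
    simp [Matrix.mulVec, dotProduct]
  | inr i =>
    simp [Matrix.neg_mulVec, hLa]

end Stmt16Aux

/-- Final step of Theorem 2 (Appendix F): since each Laplacian `L_s` annihilates `1ₙ`,
the consensus subspace `S = {(x, v) : x, v ∈ span 1ₙ}` is invariant under the flow map
`Φ = e^{A_K τ_K} ⋯ e^{A_0 τ_0}` and its inverse: `Φ z ∈ S ↔ z ∈ S`. -/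
theorem stmt_16 {n : ℕ} (K : ℕ)
    (L : ℕ → Matrix (Fin n) (Fin n) ℝ)
    (hL : ∀ s ≤ K, (L s).mulVec (fun _ => (1:ℝ)) = 0)
    (τ : ℕ → ℝ) (hτ : ∀ s ≤ K, 0 < τ s)
    (A : ℕ → Matrix (Fin n ⊕ Fin n) (Fin n ⊕ Fin n) ℝ)
    (hA : ∀ s ≤ K, A s = Matrix.fromBlocks 0 1 (-(L s)) (-1))
    (Φ : Matrix (Fin n ⊕ Fin n) (Fin n ⊕ Fin n) ℝ)
    (hΦ : Φ = ((List.range (K + 1)).reverse.map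
      (fun s => NormedSpace.exp (τ s • A s))).prod) :
    ∀ z : Fin n ⊕ Fin n → ℝ,
      (∃ a b : ℝ, Φ.mulVec z = Sum.elim (fun _ : Fin n => a) (fun _ : Fin n => b)) ↔
      (∃ a b : ℝ, z = Sum.elim (fun _ : Fin n => a) (fun _ : Fin n => b)) := by
  -- each exp(± τ s • A s) preserves Scons
  have hpres : ∀ s ≤ K, ∀ z ∈ Scons n, (NormedSpace.exp (τ s • A s)).mulVec z ∈ Scons n := by
    intro s hs
    refine exp_preserves _ ?_
    intro z hz
    rw [hA s hs]
    exact matrix_preserves (L s) (hL s hs) (τ s) z hz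
  have hpres' : ∀ s ≤ K, ∀ z ∈ Scons n,
      (NormedSpace.exp (-(τ s • A s))).mulVec z ∈ Scons n := by
    intro s hs
    refine exp_preserves _ ?_
    intro z hz
    rw [show -(τ s • A s) = (-(τ s)) • A s by rw [neg_smul], hA s hs]
    exact matrix_preserves (L s) (hL s hs) (-(τ s)) z hz
  -- the inverse product
  set Ψ : Matrix (Fin n ⊕ Fin n) (Fin n ⊕ Fin n) ℝ :=
    ((List.range (K + 1)).map (fun s => NormedSpace.exp (-(τ s • A s)))).prod with hΨ
  -- Ψ * Φ = 1
  have hinv : ∀ l : List ℕ,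
      ((l.map (fun s => NormedSpace.exp (-(τ s • A s)))).prod) *
      ((l.reverse.map (fun s => NormedSpace.exp (τ s • A s))).prod) = 1 := by
    intro l
    induction l with
    | nil => simp
    | cons h t ih =>
      letI : SeminormedRing (Matrix (Fin n ⊕ Fin n) (Fin n ⊕ Fin n) ℝ) :=
        Matrix.linftyOpSemiNormedRing
      letI : NormedRing (Matrix (Fin n ⊕ Fin n) (Fin n ⊕ Fin n) ℝ) :=
        Matrix.linftyOpNormedRing
      letI : NormedAlgebra ℝ (Matrix (Fin n ⊕ Fin n) (Fin n ⊕ Fin n) ℝ) :=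
        Matrix.linftyOpNormedAlgebra
      have hcancel : NormedSpace.exp (-(τ h • A h)) * NormedSpace.exp (τ h • A h) = 1 := by
        rw [← Matrix.exp_add_of_commute (-(τ h • A h)) (τ h • A h) (Commute.neg_left rfl), neg_add_cancel,
          NormedSpace.exp_zero]
      simp only [List.map_cons, List.prod_cons, List.reverse_cons, List.map_append,
        List.prod_append, List.map_cons, List.prod_cons, List.map_nil, List.prod_nil, mul_one]
      simp only [mul_assoc]
      rw [← mul_assoc (List.map (fun s => NormedSpace.exp (-(τ s • A s))) t).prod, ih,
        one_mul, hcancel]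
  have hΨΦ : Ψ * Φ = 1 := by rw [hΨ, hΦ]; exact hinv (List.range (K + 1))
  -- products of preserving matrices preserve
  have hprodF : ∀ z ∈ Scons n, Φ.mulVec z ∈ Scons n := by
    rw [hΦ]
    have : ∀ l : List ℕ, (∀ s ∈ l, s ≤ K) → ∀ z ∈ Scons n,
        ((l.map (fun s => NormedSpace.exp (τ s • A s))).prod).mulVec z ∈ Scons n := by
      intro l
      induction l with
      | nil => intro _ z hz; simpa using hz
      | cons h t ih =>
        intro hmem z hz
        simp only [List.map_cons, List.prod_cons, ← Matrix.mulVec_mulVec]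
        exact hpres h (hmem h (by simp)) _ (ih (fun s hs => hmem s (by simp [hs])) z hz)
    intro z hz
    refine this _ ?_ z hz
    intro s hs
    rw [List.mem_reverse, List.mem_range] at hs
    omega
  have hprodB : ∀ z ∈ Scons n, Ψ.mulVec z ∈ Scons n := by
    rw [hΨ]
    have : ∀ l : List ℕ, (∀ s ∈ l, s ≤ K) → ∀ z ∈ Scons n,
        ((l.map (fun s => NormedSpace.exp (-(τ s • A s)))).prod).mulVec z ∈ Scons n := by
      intro l
      induction l with
      | nil => intro _ z hz; simpa using hz
      | cons h t ih =>
        intro hmem z hz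
        simp only [List.map_cons, List.prod_cons, ← Matrix.mulVec_mulVec]
        exact hpres' h (hmem h (by simp)) _ (ih (fun s hs => hmem s (by simp [hs])) z hz)
    intro z hz
    refine this _ ?_ z hz
    intro s hs
    rw [List.mem_range] at hs
    omega
  intro z
  rw [← mem_Scons_iff, ← mem_Scons_iff]
  constructor
  · intro h
    have : (Ψ * Φ).mulVec z ∈ Scons n := by
      rw [← Matrix.mulVec_mulVec]
      exact hprodB _ h
    rwa [hΨΦ, Matrix.one_mulVec] at this
  · exact hprodF z
end
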